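/- arXiv:2604.22584 — 11 statements merged into one kernel-verified Lean document; each statement's English description precedes it below -/
import Mathlib

section
/- Let G be a multigraph on n vertices and k ≥ 1 an integer. If every subgraph H of G on at least two vertices has edge-connectivity at most k, then G has at most k(n-1) edges. -/
/-- A multigraph on vertex type `V`, given by symmetric loopless edge multiplicities. -/
structure Multigraph (V : Type*) where
  mult : V → V → ℕ
  symm : ∀ u v, mult u v = mult v u
  loopless : ∀ v, mult v v = 0

/-- The number of edges of `G` between `T` and `S \ T`, i.e. the size of the cut
determined by `T` in the subgraph of `G` induced by `S`. -/
def inducedCut {V : Type*} [DecidableEq V] (G : Multigraph V) (S T : Finset V) : ℕ :=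
  ∑ u ∈ T, ∑ v ∈ S \ T, G.mult u v

lemma aux_stmt_0 {V : Type*} [DecidableEq V] (G : Multigraph V) (k : ℕ)
    (h : ∀ S : Finset V, 2 ≤ S.card →
      ∃ T : Finset V, T ⊆ S ∧ T.Nonempty ∧ T ≠ S ∧ inducedCut G S T ≤ k) :
    ∀ S : Finset V, ∑ u ∈ S, ∑ v ∈ S, G.mult u v ≤ 2 * (k * (S.card - 1)) := by
  intro S
  induction S using Finset.strongInduction with
  | _ S ih =>
    by_cases hS : 2 ≤ S.card
    · obtain ⟨T, hTS, hTne, hTneq, hcut⟩ := h S hS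
      have hST : S \ T ⊂ S := by
        refine Finset.sdiff_ssubset ?_ hTne
        exact hTS
      have hT : T ⊂ S := hTS.ssubset_of_ne hTneq
      have hSTne : (S \ T).Nonempty := by
        rw [Finset.sdiff_nonempty]
        intro hsub
        exact hTneq (Finset.Subset.antisymm hTS hsub)
      have hsplit : ∀ u, ∑ v ∈ S, G.mult u v
          = ∑ v ∈ S \ T, G.mult u v + ∑ v ∈ T, G.mult u v :=
        fun u => (Finset.sum_sdiff hTS).symm
      have hsplit2 : ∑ u ∈ S, ∑ v ∈ S, G.mult u v
          = (∑ u ∈ T, ∑ v ∈ T, G.mult u v) + (∑ u ∈ S \ T, ∑ v ∈ S \ T, G.mult u v)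
            + (inducedCut G S T + ∑ u ∈ S \ T, ∑ v ∈ T, G.mult u v) := by
        rw [← Finset.sum_sdiff hTS]
        simp only [hsplit]
        rw [Finset.sum_add_distrib, Finset.sum_add_distrib]
        unfold inducedCut
        ring
      have hsym : ∑ u ∈ S \ T, ∑ v ∈ T, G.mult u v = inducedCut G S T := by
        unfold inducedCut
        rw [Finset.sum_comm]
        exact Finset.sum_congr rfl fun u _ => Finset.sum_congr rfl fun v _ => G.symm v u
      have h1 := ih T hT
      have h2 := ih (S \ T) hST
      have hcard : (S \ T).card = S.card - T.card := Finset.card_sdiff_of_subset hTS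
      have hT1 : 1 ≤ T.card := hTne.card_pos
      have hTS1 : T.card < S.card := Finset.card_lt_card hT
      rw [hsplit2, hsym]
      have : 2 * (k * (T.card - 1)) + 2 * (k * ((S \ T).card - 1)) + 2 * k
          = 2 * (k * (S.card - 1)) := by
        rw [hcard]
        have hp : S.card - 1 = (T.card - 1) + (S.card - T.card - 1) + 1 := by omega
        rw [hp]; ring
      omega
    · interval_cases hc : S.card
      · rw [Finset.card_eq_zero] at hc
        simp [hc]
      · rw [Finset.card_eq_one] at hc
        obtain ⟨a, rfl⟩ := hc
        simp [G.loopless]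

/-- If every (induced) subgraph of `G` on at least two vertices has edge-connectivity at
most `k` (i.e. admits a cut of size at most `k`), then `G` has at most `k (n - 1)` edges,
stated here by double counting: the sum of all multiplicities is at most `2 k (n - 1)`. -/
theorem stmt_0 {V : Type*} [Fintype V] [DecidableEq V] (G : Multigraph V) (k : ℕ)
    (hk : 1 ≤ k)
    (h : ∀ S : Finset V, 2 ≤ S.card →
      ∃ T : Finset V, T ⊆ S ∧ T.Nonempty ∧ T ≠ S ∧ inducedCut G S T ≤ k) :
    ∑ u : V, ∑ v : V, G.mult u v ≤ 2 * (k * (Fintype.card V - 1)) := by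
  have := aux_stmt_0 G k h Finset.univ
  rwa [← Finset.card_univ]
end

section
/- Let D be a digraph, k ≥ 1 an integer, and W a nonempty subset of V(D) such that the induced subdigraph D[W] is k-arc-strong. If for every vertex v ∈ V(D) \ W there are at least k pairwise arc-disjoint directed paths from v to W and at least k pairwise arc-disjoint directed paths from W to v, then D is k-arc-strong. -/
/-- The number of arcs of the digraph `D` leaving the vertex set `S`. -/
noncomputable def dicut {V : Type*} [Fintype V] (D : V → V → Prop) (S : Finset V) : ℕ :=
  Nat.card {p : V × V // p.1 ∈ S ∧ p.2 ∉ S ∧ D p.1 p.2}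

/-- A digraph is `k`-arc-strong iff every dicut has size at least `k`. -/
def ArcStrong {V : Type*} [Fintype V] (D : V → V → Prop) (k : ℕ) : Prop :=
  ∀ S : Finset V, S.Nonempty → S ≠ Finset.univ → k ≤ dicut D S

/-- The arcs traversed by the walk `l`, as a list of ordered pairs. -/
def arcsOf {V : Type*} (l : List V) : List (V × V) := l.zip l.tail

/-- There exist `m` pairwise arc-disjoint directed paths in `D`, each starting at a vertex
satisfying `src` and ending at a vertex satisfying `tgt`. -/
def HasArcDisjointPaths {V : Type*} (D : V → V → Prop) (m : ℕ) (src tgt : V → Prop) : Prop :=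
  ∃ P : Fin m → List V,
    (∀ i, (P i).Nodup ∧ (P i).Chain' D ∧
      (∃ s, (P i).head? = some s ∧ src s) ∧ (∃ t, (P i).getLast? = some t ∧ tgt t)) ∧
    ∀ i j, i ≠ j → ∀ a ∈ arcsOf (P i), a ∉ arcsOf (P j)

/-
Let `S` be a nonempty proper vertex set. If `S` contains `W`, the `k` arc-disjoint paths from `W`
to a vertex outside `S` each leave `S`; if `S` misses `W`, so do the `k` paths from a vertex of `S`
to `W`. Otherwise `S ∩ W` is a proper nonempty subset of `W`, and the `k` arcs of `D[W]` leaving it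
also leave `S`.
-/

section

variable {V : Type*}

lemma exists_arc_leaving_of_chain (D : V → V → Prop) (S : Finset V) :
    ∀ l : List V, l.IsChain D → ∀ s, l.head? = some s → s ∈ S →
      ∀ t, l.getLast? = some t → t ∉ S → ∃ a ∈ arcsOf l, a.1 ∈ S ∧ a.2 ∉ S ∧ D a.1 a.2
  | [], _, _, hs, _, _, _, _ => by simp at hs
  | [x], _, s, hs, hsS, t, ht, htS => by
    simp only [List.head?_cons, List.getLast?_singleton, Option.some.injEq] at hs ht
    subst hs ht
    exact absurd hsS htS
  | x :: y :: l, hch, s, hs, hsS, t, ht, htS => by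
    simp only [List.head?_cons, Option.some.injEq] at hs
    subst hs
    rw [List.isChain_cons_cons] at hch
    by_cases hy : y ∈ S
    · obtain ⟨a, ha, hleave⟩ :=
        exists_arc_leaving_of_chain D S (y :: l) hch.2 y rfl hy t (by simpa using ht) htS
      exact ⟨a, by simp_all [arcsOf], hleave⟩
    · exact ⟨(x, y), by simp [arcsOf], hsS, hy, hch.1⟩

lemma le_dicut_of_hasArcDisjointPaths [Fintype V] {D : V → V → Prop} {S : Finset V} {k : ℕ}
    {src tgt : V → Prop} (h : HasArcDisjointPaths D k src tgt)
    (hsrc : ∀ v, src v → v ∈ S) (htgt : ∀ v, tgt v → v ∉ S) :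
    k ≤ dicut D S := by
  obtain ⟨P, hP, hdisj⟩ := h
  have hcross : ∀ i, ∃ a ∈ arcsOf (P i), a.1 ∈ S ∧ a.2 ∉ S ∧ D a.1 a.2 := fun i => by
    obtain ⟨_, hch, ⟨s, hs, hss⟩, ⟨t, ht, htt⟩⟩ := hP i
    exact exists_arc_leaving_of_chain D S (P i) hch s hs (hsrc s hss) t ht (htgt t htt)
  choose a ha hleave using hcross
  have hinj : Function.Injective
      (fun i => (⟨a i, hleave i⟩ : {p : V × V // p.1 ∈ S ∧ p.2 ∉ S ∧ D p.1 p.2})) := by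
    intro i j hij
    by_contra hne
    have hij' : a i = a j := congrArg Subtype.val hij
    exact hdisj i j hne (a i) (ha i) (hij' ▸ ha j)
  simpa [dicut] using Nat.card_le_card_of_injective _ hinj

lemma card_arcs_leaving_inter_le_dicut [Fintype V] [DecidableEq V] (D : V → V → Prop)
    (S W : Finset V) :
    Nat.card {p : V × V // p.1 ∈ S ∩ W ∧ p.2 ∈ W \ (S ∩ W) ∧ D p.1 p.2} ≤ dicut D S :=
  Nat.card_le_card_of_injective
    (fun p => ⟨p.1, (Finset.mem_inter.mp p.2.1).1,
      fun hS => (Finset.mem_sdiff.mp p.2.2.1).2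
        (Finset.mem_inter.mpr ⟨hS, (Finset.mem_sdiff.mp p.2.2.1).1⟩), p.2.2.2⟩)
    (fun _ _ h => Subtype.ext (congrArg Subtype.val h :))

end

theorem stmt_1_general {V : Type*} [Fintype V] [DecidableEq V] (D : V → V → Prop) (k : ℕ)
    (W : Finset V)
    (hWstrong : ∀ S : Finset V, S ⊆ W → S.Nonempty → S ≠ W →
      k ≤ Nat.card {p : V × V // p.1 ∈ S ∧ p.2 ∈ W \ S ∧ D p.1 p.2})
    (hpaths : ∀ v, v ∉ W →
      HasArcDisjointPaths D k (· = v) (· ∈ W) ∧ HasArcDisjointPaths D k (· ∈ W) (· = v)) :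
    ArcStrong D k := by
  intro S hS hSuniv
  by_cases hWS : W ⊆ S
  · obtain ⟨v, hv⟩ : ∃ v, v ∉ S := by
      simpa [Finset.eq_univ_iff_forall] using hSuniv
    exact le_dicut_of_hasArcDisjointPaths (hpaths v (fun h => hv (hWS h))).2
      (fun _ hw => hWS hw) (fun _ hw => hw ▸ hv)
  by_cases hSW : (S ∩ W).Nonempty
  · have hne : S ∩ W ≠ W := fun h => hWS (h ▸ Finset.inter_subset_left)
    exact (hWstrong _ Finset.inter_subset_right hSW hne).trans
      (card_arcs_leaving_inter_le_dicut D S W)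
  · obtain ⟨v, hv⟩ := hS
    have hmiss : ∀ w ∈ S, w ∉ W := fun w hwS hwW => hSW ⟨w, Finset.mem_inter.mpr ⟨hwS, hwW⟩⟩
    exact le_dicut_of_hasArcDisjointPaths (hpaths v (hmiss v hv)).1
      (fun _ hw => hw ▸ hv) (fun w hwW hwS => hmiss w hwS hwW)

/-- If `D[W]` is `k`-arc-strong and every vertex outside `W` has `k` arc-disjoint paths to `W`
and `k` arc-disjoint paths from `W`, then `D` is `k`-arc-strong. -/
theorem stmt_1 {V : Type*} [Fintype V] [DecidableEq V] (D : V → V → Prop) (k : ℕ)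
    (hk : 1 ≤ k) (W : Finset V) (hW : W.Nonempty)
    (hWstrong : ∀ S : Finset V, S ⊆ W → S.Nonempty → S ≠ W →
      k ≤ Nat.card {p : V × V // p.1 ∈ S ∧ p.2 ∈ W \ S ∧ D p.1 p.2})
    (hpaths : ∀ v, v ∉ W →
      HasArcDisjointPaths D k (· = v) (· ∈ W) ∧ HasArcDisjointPaths D k (· ∈ W) (· = v)) :
    ArcStrong D k :=
  stmt_1_general D k W hWstrong hpaths
end

section
/- Let D be a digraph with underlying graph G, and let (X₁,…,X_r,Y) be a partition of V(D) into nonempty parts such that, with X = X₁ ∪ … ∪ X_r: (i) d_G(X_i) = 2k for all i; (ii) for every x ∈ X and y ∈ Y there is exactly one edge between x and y in G; (iii) d_D^+(X) − (1/2)|X|·|Y| is an odd integer. Then D is not k-arc-strong. -/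
/-- The number of edges of the underlying graph of `D` leaving `S`. -/
noncomputable def undirCut {V : Type*} [Fintype V] (D : V → V → Prop) (S : Finset V) : ℕ :=
  dicut D S + dicut (fun u v => D v u) S

open Finset

open scoped Classical in
noncomputable def ind (P : Prop) : ℤ := if P then 1 else 0

lemma ind_pos {P : Prop} (h : P) : ind P = 1 := by simp [ind, h]
lemma ind_neg {P : Prop} (h : ¬ P) : ind P = 0 := by simp [ind, h]
lemma ind_not (P : Prop) : ind (¬ P) = 1 - ind P := by
  by_cases h : P <;> simp [ind, h]

lemma dicut_eq_sum {V : Type*} [Fintype V] (D : V → V → Prop) (S : Finset V) :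
    (dicut D S : ℤ) = ∑ u : V, ∑ v : V, ind (u ∈ S) * ind (v ∉ S) * ind (D u v) := by
  classical
  rw [dicut, Nat.card_eq_fintype_card, Fintype.card_subtype, Finset.card_filter]
  push_cast
  rw [Fintype.sum_prod_type]
  refine Finset.sum_congr rfl fun u _ => Finset.sum_congr rfl fun v _ => ?_
  by_cases h1 : u ∈ S <;> by_cases h2 : v ∈ S <;> by_cases h3 : D u v <;>
    simp [ind, h1, h2, h3]

lemma dicut_flip {V : Type*} [Fintype V] [DecidableEq V] (D : V → V → Prop) (S : Finset V) :
    (dicut (fun u v => D v u) S : ℤ) = (dicut D Sᶜ : ℤ) := by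
  rw [dicut_eq_sum, dicut_eq_sum, Finset.sum_comm]
  refine Finset.sum_congr rfl fun u _ => Finset.sum_congr rfl fun v _ => ?_
  have h1 : (u ∈ Sᶜ) = (u ∉ S) := by simp
  have h2 : (v ∉ Sᶜ) = (v ∈ S) := by simp
  rw [h1, h2]; ring

lemma sum_antisym {V : Type*} [Fintype V] (w F : V → V → ℤ)
    (hw : ∀ u v, w u v = w v u) (hF : ∀ u v, F u v = - F v u) :
    ∑ u : V, ∑ v : V, w u v * F u v = 0 := by
  have h : ∑ u : V, ∑ v : V, w u v * F u v = ∑ u : V, ∑ v : V, -(w u v * F u v) := by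
    rw [Finset.sum_comm]
    refine Finset.sum_congr rfl fun u _ => Finset.sum_congr rfl fun v _ => ?_
    rw [hw v u, hF v u]; ring
  simp only [Finset.sum_neg_distrib] at h
  linarith

lemma key_identity {V : Type*} [Fintype V] {r : ℕ} (x : Fin r → V → ℤ) (xX : V → ℤ)
    (F : V → V → ℤ) (hF : ∀ u v, F u v = - F v u)
    (hsum : ∀ u, ∑ i : Fin r, x i u = xX u) :
    ∑ i : Fin r, ∑ u : V, ∑ v : V, x i u * (1 - x i v) * F u v
      = ∑ u : V, ∑ v : V, xX u * (1 - xX v) * F u v := by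
  have h1 : ∑ i : Fin r, ∑ u : V, ∑ v : V, x i u * (1 - x i v) * F u v
      = ∑ u : V, ∑ v : V, (xX u - ∑ i : Fin r, x i u * x i v) * F u v := by
    rw [Finset.sum_comm]
    refine Finset.sum_congr rfl fun u _ => ?_
    rw [Finset.sum_comm]
    refine Finset.sum_congr rfl fun v _ => ?_
    have e : ∀ i ∈ (Finset.univ : Finset (Fin r)),
        x i u * (1 - x i v) * F u v = x i u * F u v - x i u * x i v * F u v :=
      fun i _ => by ring
    rw [Finset.sum_congr rfl e, Finset.sum_sub_distrib, ← Finset.sum_mul, ← Finset.sum_mul,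
      hsum u]
    ring
  have hw : ∀ u v : V, (xX u * xX v - ∑ i : Fin r, x i u * x i v)
      = (xX v * xX u - ∑ i : Fin r, x i v * x i u) := by
    intro u v
    rw [mul_comm]
    congr 1
    exact Finset.sum_congr rfl fun i _ => mul_comm _ _
  have h2 := sum_antisym (fun u v => xX u * xX v - ∑ i : Fin r, x i u * x i v) F hw hF
  rw [h1]
  have h3 : ∑ u : V, ∑ v : V, (xX u - ∑ i : Fin r, x i u * x i v) * F u v
      = ∑ u : V, ∑ v : V, (xX u * (1 - xX v) * F u v
          + (xX u * xX v - ∑ i : Fin r, x i u * x i v) * F u v) := by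
    refine Finset.sum_congr rfl fun u _ => Finset.sum_congr rfl fun v _ => ?_
    ring
  rw [h3]
  simp only [Finset.sum_add_distrib]
  rw [h2, add_zero]

lemma dicut_sub {V : Type*} [Fintype V] (D : V → V → Prop) (S : Finset V) :
    (dicut D S : ℤ) - (dicut (fun u v => D v u) S : ℤ)
      = ∑ u : V, ∑ v : V, ind (u ∈ S) * (1 - ind (v ∈ S)) * (ind (D u v) - ind (D v u)) := by
  rw [dicut_eq_sum, dicut_eq_sum, ← Finset.sum_sub_distrib]
  refine Finset.sum_congr rfl fun u _ => ?_
  rw [← Finset.sum_sub_distrib]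
  refine Finset.sum_congr rfl fun v _ => ?_
  rw [ind_not]
  ring

lemma sum_ind_mem {V : Type*} [Fintype V] [DecidableEq V] (S : Finset V) :
    ∑ u : V, ind (u ∈ S) = S.card := by
  have h : ∀ u : V, ind (u ∈ S) = if u ∈ S then (1:ℤ) else 0 := fun u => by
    by_cases h : u ∈ S <;> simp [ind, h]
  simp_rw [h]
  rw [Finset.sum_ite_mem, Finset.univ_inter, Finset.sum_const]
  simp

/-- A `k`-obstruction is not `k`-arc-strong: if `(X₁,…,X_r,Y)` is a partition of `V(D)` into
nonempty parts with `d_G(Xᵢ) = 2k` for all `i`, exactly one edge between every `x ∈ X` and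
`y ∈ Y`, and `d⁺(X) - |X||Y|/2` an odd integer, then `D` is not `k`-arc-strong. -/
theorem stmt_2 {V : Type*} [Fintype V] [DecidableEq V] (D : V → V → Prop)
    (hirr : ∀ v, ¬ D v v) (k r : ℕ) (hk : 1 ≤ k) (hr : 1 ≤ r)
    (Xs : Fin r → Finset V) (Y : Finset V)
    (hXne : ∀ i, (Xs i).Nonempty) (hYne : Y.Nonempty)
    (hdisjXX : ∀ i j, i ≠ j → Disjoint (Xs i) (Xs j))
    (hdisjXY : ∀ i, Disjoint (Xs i) Y)
    (hcover : (Finset.univ.biUnion Xs) ∪ Y = Finset.univ)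
    (hdeg : ∀ i, undirCut D (Xs i) = 2 * k)
    (hone : ∀ x ∈ Finset.univ.biUnion Xs, ∀ y ∈ Y,
      (D x y ∧ ¬ D y x) ∨ (D y x ∧ ¬ D x y))
    (hodd : ∃ m : ℤ, Odd m ∧
      2 * m = 2 * (dicut D (Finset.univ.biUnion Xs) : ℤ)
        - ((Finset.univ.biUnion Xs).card : ℤ) * (Y.card : ℤ)) :
    ¬ ArcStrong D k := by
  intro hAS
  set X : Finset V := Finset.univ.biUnion Xs with hXdef
  obtain ⟨y₀, hy₀⟩ := hYne
  -- membership facts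
  have hXY : ∀ v : V, v ∉ X ↔ v ∈ Y := by
    intro v
    constructor
    · intro hv
      have hvu : v ∈ X ∪ Y := by rw [hcover]; exact Finset.mem_univ v
      rcases Finset.mem_union.1 hvu with h | h
      · exact absurd h hv
      · exact h
    · intro hvY hv
      obtain ⟨i, -, hi⟩ := Finset.mem_biUnion.1 hv
      exact (Finset.disjoint_left.1 (hdisjXY i)) hi hvY
  have hmem : ∀ u : V, ∑ i : Fin r, ind (u ∈ Xs i) = ind (u ∈ X) := by
    intro u
    by_cases hu : u ∈ X
    · obtain ⟨i, -, hi⟩ := Finset.mem_biUnion.1 hu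
      rw [ind_pos hu]
      rw [Finset.sum_eq_single i
        (fun j _ hji => ind_neg fun hj =>
          Finset.disjoint_left.1 (hdisjXX j i hji) hj hi)
        (fun h => absurd (Finset.mem_univ i) h)]
      exact ind_pos hi
    · rw [ind_neg hu]
      refine Finset.sum_eq_zero fun i _ => ind_neg fun hi => hu ?_
      exact Finset.mem_biUnion.2 ⟨i, Finset.mem_univ i, hi⟩
  -- Step A: on each part, out-degree equals in-degree
  have heq : ∀ i, (dicut D (Xs i) : ℤ) = (dicut (fun u v => D v u) (Xs i) : ℤ) := by
    intro i
    obtain ⟨x₀, hx₀⟩ := hXne i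
    have hy₀i : y₀ ∉ Xs i := fun h => Finset.disjoint_left.1 (hdisjXY i) h hy₀
    have hne : Xs i ≠ Finset.univ := fun h => hy₀i (h ▸ Finset.mem_univ y₀)
    have hcne : ((Xs i)ᶜ : Finset V).Nonempty := ⟨y₀, Finset.mem_compl.2 hy₀i⟩
    have hcneu : ((Xs i)ᶜ : Finset V) ≠ Finset.univ := fun h => by
      have : x₀ ∈ (Xs i)ᶜ := h ▸ Finset.mem_univ x₀
      exact Finset.mem_compl.1 this hx₀
    have h1 : (k : ℤ) ≤ (dicut D (Xs i) : ℤ) := by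
      exact_mod_cast hAS (Xs i) (hXne i) hne
    have h2 : (k : ℤ) ≤ (dicut D ((Xs i)ᶜ) : ℤ) := by
      exact_mod_cast hAS ((Xs i)ᶜ) hcne hcneu
    have h3 := dicut_flip D (Xs i)
    have h4 : (dicut D (Xs i) : ℤ) + (dicut (fun u v => D v u) (Xs i) : ℤ) = 2 * k := by
      have h := hdeg i
      rw [undirCut] at h
      exact_mod_cast congrArg (Nat.cast : ℕ → ℤ) h
    linarith
  have hzero : ∑ i : Fin r,
      ((dicut D (Xs i) : ℤ) - (dicut (fun u v => D v u) (Xs i) : ℤ)) = 0 :=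
    Finset.sum_eq_zero fun i _ => by rw [heq i]; ring
  -- Step B: global identity
  have hB : ∑ i : Fin r,
      ((dicut D (Xs i) : ℤ) - (dicut (fun u v => D v u) (Xs i) : ℤ))
      = (dicut D X : ℤ) - (dicut (fun u v => D v u) X : ℤ) := by
    simp_rw [dicut_sub]
    exact key_identity (fun i u => ind (u ∈ Xs i)) (fun u => ind (u ∈ X))
      (fun u v => ind (D u v) - ind (D v u)) (fun u v => by ring) hmem
  have he1 : (dicut D X : ℤ) - (dicut (fun u v => D v u) X : ℤ) = 0 := by
    rw [← hB]; exact hzero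
  -- Step C
  have hC : (dicut D X : ℤ) + (dicut (fun u v => D v u) X : ℤ)
      = (X.card : ℤ) * (Y.card : ℤ) := by
    rw [dicut_eq_sum, dicut_eq_sum, ← Finset.sum_add_distrib]
    have : ∀ u : V, (∑ v : V, ind (u ∈ X) * ind (v ∉ X) * ind (D u v))
        + (∑ v : V, ind (u ∈ X) * ind (v ∉ X) * ind (D v u))
        = ∑ v : V, ind (u ∈ X) * ind (v ∈ Y) := by
      intro u
      rw [← Finset.sum_add_distrib]
      refine Finset.sum_congr rfl fun v _ => ?_
      by_cases hu : u ∈ X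
      · by_cases hv : v ∈ X
        · have e1 : ind (v ∉ X) = 0 := ind_neg (not_not_intro hv)
          have e2 : ind (v ∈ Y) = 0 := ind_neg fun hvY => (hXY v).2 hvY hv
          rw [e1, e2]; ring
        · have hvY : v ∈ Y := (hXY v).1 hv
          rw [ind_pos hu, ind_pos hv, ind_pos hvY]
          rcases hone u hu v hvY with ⟨h1, h2⟩ | ⟨h1, h2⟩
          · rw [ind_pos h1, ind_neg h2]; ring
          · rw [ind_neg h2, ind_pos h1]; ring
      · rw [ind_neg hu]; ring
    calc (∑ u : V, ((∑ v : V, ind (u ∈ X) * ind (v ∉ X) * ind (D u v))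
            + ∑ v : V, ind (u ∈ X) * ind (v ∉ X) * ind (D v u)))
        = ∑ u : V, ∑ v : V, ind (u ∈ X) * ind (v ∈ Y) :=
          Finset.sum_congr rfl fun u _ => this u
      _ = (∑ u : V, ind (u ∈ X)) * (∑ v : V, ind (v ∈ Y)) := by
          rw [Finset.sum_mul_sum]
      _ = (X.card : ℤ) * (Y.card : ℤ) := by rw [sum_ind_mem, sum_ind_mem]
  -- Step D
  obtain ⟨m, hmodd, hm⟩ := hodd
  have hm0 : m = 0 := by linarith
  rw [hm0] at hmodd
  obtain ⟨c, hc⟩ := hmodd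
  omega
end

section
/- For every odd integer p ≥ 3 and every positive integer k, if D is a k-obstruction, then D cannot be made k-arc-strong by applying any finite sequence of inversions of vertex sets of size exactly p. -/
/-- Inverting the vertex set `X` in `D`: all arcs with both endvertices in `X` are reversed. -/
def invert {V : Type*} [DecidableEq V] (D : V → V → Prop) (X : Finset V) : V → V → Prop :=
  fun u v => if u ∈ X ∧ v ∈ X then D v u else D u v

/-- Applying a sequence of inversions. -/
def invertSeq {V : Type*} [DecidableEq V] (D : V → V → Prop) (l : List (Finset V)) :
    V → V → Prop :=
  l.foldl invert D

/-- `D` is a `k`-obstruction. -/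
def IsKObstruction {V : Type*} [Fintype V] [DecidableEq V] (D : V → V → Prop) (k : ℕ) : Prop :=
  ∃ (r : ℕ) (Xs : Fin r → Finset V) (Y : Finset V),
    1 ≤ r ∧ (∀ i, (Xs i).Nonempty) ∧ Y.Nonempty ∧
    (∀ i j, i ≠ j → Disjoint (Xs i) (Xs j)) ∧ (∀ i, Disjoint (Xs i) Y) ∧
    (Finset.univ.biUnion Xs) ∪ Y = Finset.univ ∧
    (∀ i, undirCut D (Xs i) = 2 * k) ∧
    (∀ x ∈ Finset.univ.biUnion Xs, ∀ y ∈ Y, (D x y ∧ ¬ D y x) ∨ (D y x ∧ ¬ D x y)) ∧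
    (∃ m : ℤ, Odd m ∧
      2 * m = 2 * (dicut D (Finset.univ.biUnion Xs) : ℤ)
        - ((Finset.univ.biUnion Xs).card : ℤ) * (Y.card : ℤ))

open Finset
open scoped Classical

section Invert

variable {V : Type*} [DecidableEq V] {D : V → V → Prop} {W : Finset V} {x y : V}

lemma invert_apply_of_mem (hx : x ∈ W) (hy : y ∈ W) :
    invert D W x y ↔ D y x := by
  simp [invert, hx, hy]

lemma invert_apply_of_not_mem (h : ¬ (x ∈ W ∧ y ∈ W)) : invert D W x y ↔ D x y := by
  simp [invert, h]

lemma xor_invert_iff (D : V → V → Prop) (W : Finset V) (x y : V) :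
    Xor (invert D W x y) (invert D W y x) ↔ Xor (D x y) (D y x) := by
  by_cases h : x ∈ W ∧ y ∈ W
  · simp only [invert_apply_of_mem h.1 h.2, invert_apply_of_mem h.2 h.1, xor_comm]
  · simp only [invert_apply_of_not_mem h, invert_apply_of_not_mem (mt And.symm h)]

end Invert

section Obstruction

variable {V : Type*} [Fintype V] [DecidableEq V]

lemma dicut_eq_sum_s3 (D : V → V → Prop) (S : Finset V) :
    dicut D S = ∑ x ∈ S, ∑ y ∈ Sᶜ, if D x y then 1 else 0 := by
  rw [dicut, Nat.card_eq_fintype_card, Fintype.card_subtype, ← sum_product (f := fun p =>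
    if D p.1 p.2 then 1 else 0), ← card_filter]
  congr 1
  ext ⟨x, y⟩
  simp only [mem_filter, mem_univ, true_and, mem_product, mem_compl, and_assoc]

lemma dicut_compl (D : V → V → Prop) (S : Finset V) :
    dicut D Sᶜ = dicut (fun u v => D v u) S :=
  Nat.card_congr <| (Equiv.prodComm V V).subtypeEquiv fun p => by
    simp only [Equiv.prodComm_apply, Prod.fst_swap, Prod.snd_swap, mem_compl, not_not]
    tauto

lemma undirCut_eq_sum (D : V → V → Prop) (S : Finset V) :
    undirCut D S = ∑ x ∈ S, ∑ y ∈ Sᶜ, ((if D x y then 1 else 0) + if D y x then 1 else 0) := by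
  simp only [undirCut, dicut_eq_sum_s3, sum_add_distrib]

lemma undirCut_eq_card_mul_card (D : V → V → Prop) (S : Finset V)
    (hxor : ∀ x ∈ S, ∀ y ∈ Sᶜ, Xor (D x y) (D y x)) :
    undirCut D S = #S * #Sᶜ := by
  rw [undirCut_eq_sum, card_eq_sum_ones S, sum_mul]
  refine sum_congr rfl fun x hx => ?_
  rw [one_mul, card_eq_sum_ones]
  refine sum_congr rfl fun y hy => ?_
  rcases hxor x hx y hy with ⟨h, h'⟩ | ⟨h, h'⟩ <;> simp [h, h']

noncomputable def netOutflow (D : V → V → Prop) (S : Finset V) : ℤ :=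
  dicut D S - dicut (fun u v => D v u) S

/-- Arcs inside `S` contribute to both degree sums and cancel. -/
lemma netOutflow_eq_sum_degree (D : V → V → Prop) (S : Finset V) :
    netOutflow D S = ∑ x ∈ S, ∑ y, ((if D x y then 1 else 0) - if D y x then 1 else 0) := by
  have hinner : ∑ x ∈ S, ∑ y ∈ S, ((if D x y then (1 : ℤ) else 0) - if D y x then 1 else 0) = 0 := by
    simp only [sum_sub_distrib]
    exact sub_eq_zero.mpr sum_comm
  calc netOutflow D S
      = ∑ x ∈ S, ∑ y ∈ S, ((if D x y then (1 : ℤ) else 0) - if D y x then 1 else 0)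
        + ∑ x ∈ S, ∑ y ∈ Sᶜ, ((if D x y then (1 : ℤ) else 0) - if D y x then 1 else 0) := by
        rw [hinner, zero_add, netOutflow, dicut_eq_sum_s3, dicut_eq_sum_s3]
        push_cast
        simp only [sum_sub_distrib]
    _ = _ := by
        rw [← sum_add_distrib]
        exact sum_congr rfl fun x _ => sum_add_sum_compl S _

lemma netOutflow_biUnion {ι : Type*} (D : V → V → Prop) (s : Finset ι) (Xs : ι → Finset V)
    (hdisj : (s : Set ι).PairwiseDisjoint Xs) :
    netOutflow D (s.biUnion Xs) = ∑ i ∈ s, netOutflow D (Xs i) := by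
  simp only [netOutflow_eq_sum_degree, sum_biUnion hdisj]

lemma netOutflow_eq_zero_of_arcStrong {D : V → V → Prop} {k : ℕ} (hD : ArcStrong D k)
    {S : Finset V} (hne : S.Nonempty) (hS : S ≠ univ) (hcut : undirCut D S = 2 * k) :
    netOutflow D S = 0 := by
  have hout : k ≤ dicut D S := hD S hne hS
  have hin : k ≤ dicut (fun u v => D v u) S := by
    rw [← dicut_compl]
    refine hD Sᶜ ?_ ?_
    · exact (compl_ne_univ_iff_nonempty Sᶜ).mp (by rwa [compl_compl])
    · exact (compl_ne_univ_iff_nonempty S).mpr hne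
  rw [undirCut] at hcut
  rw [netOutflow]
  omega

lemma eq_compl_biUnion_of_partition {r : ℕ} (Xs : Fin r → Finset V) (Y : Finset V)
    (hdisjY : ∀ i, Disjoint (Xs i) Y) (hcover : univ.biUnion Xs ∪ Y = univ) :
    Y = (univ.biUnion Xs)ᶜ :=
  eq_compl_iff_isCompl.mpr
    ⟨((disjoint_biUnion_left _ _ _).mpr fun i _ => hdisjY i).symm,
      codisjoint_iff.mpr (by rw [sup_comm]; exact hcover)⟩

theorem IsKObstruction.not_arcStrong {D : V → V → Prop} {k : ℕ} (hD : IsKObstruction D k) :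
    ¬ ArcStrong D k := by
  obtain ⟨r, Xs, Y, -, hXne, ⟨y, hy⟩, hdisj, hdisjY, hcover, hcut, hxor, m, hm_odd, hm⟩ := hD
  intro hAS
  set X := univ.biUnion Xs
  have hY : Y = Xᶜ := eq_compl_biUnion_of_partition Xs Y hdisjY hcover
  have hnet : netOutflow D X = 0 := by
    rw [netOutflow_biUnion D univ Xs fun i _ j _ hij => hdisj i j hij]
    refine sum_eq_zero fun i _ => netOutflow_eq_zero_of_arcStrong hAS (hXne i) ?_ (hcut i)
    exact fun h => disjoint_left.mp (hdisjY i) (h ▸ mem_univ y) hy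
  have hundir := congrArg (Nat.cast : ℕ → ℤ) (undirCut_eq_card_mul_card D X (hY ▸ hxor))
  push_cast [undirCut] at hundir
  rw [netOutflow] at hnet
  rw [hY] at hm
  obtain ⟨n, rfl⟩ := hm_odd
  omega

lemma undirCut_invert (D : V → V → Prop) (W S : Finset V) :
    undirCut (invert D W) S = undirCut D S := by
  simp only [undirCut_eq_sum]
  refine sum_congr rfl fun x _ => sum_congr rfl fun y _ => ?_
  by_cases h : x ∈ W ∧ y ∈ W
  · simp only [invert_apply_of_mem h.1 h.2, invert_apply_of_mem h.2 h.1, add_comm]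
  · simp only [invert_apply_of_not_mem h, invert_apply_of_not_mem (mt And.symm h)]

lemma dicut_invert_modEq_two (D : V → V → Prop) (W S : Finset V) (hW : Odd #W)
    (hxor : ∀ x ∈ S, ∀ y ∈ Sᶜ, Xor (D x y) (D y x)) :
    dicut (invert D W) S ≡ dicut D S [MOD 2] := by
  rw [← ZMod.natCast_eq_natCast_iff]
  have hflip : ∀ x ∈ S, ∀ y ∈ Sᶜ, (if invert D W x y then 1 else 0 : ZMod 2) =
      (if D x y then 1 else 0) + (if x ∈ W then 1 else 0) * (if y ∈ W then 1 else 0) := by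
    intro x hx y hy
    by_cases h : x ∈ W ∧ y ∈ W
    · rcases hxor x hx y hy with ⟨h₁, h₂⟩ | ⟨h₁, h₂⟩
      · simp only [invert_apply_of_mem h.1 h.2, h.1, h.2, h₁, h₂, if_true, if_false]
        decide
      · simp only [invert_apply_of_mem h.1 h.2, h.1, h.2, h₁, h₂, if_true, if_false]
        decide
    · rw [invert_apply_of_not_mem h]
      rw [not_and_or] at h
      rcases h with h | h <;> simp [h]
  have hsplit : ((#W : ℕ) : ZMod 2) = #(S ∩ W) + #(Sᶜ ∩ W) := by
    rw [← Nat.cast_add, ← card_union_of_disjoint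
      (disjoint_compl_right.mono inter_subset_left inter_subset_left), ← union_inter_distrib_right,
      union_compl, univ_inter]
  have hprod : (#(S ∩ W) : ZMod 2) * #(Sᶜ ∩ W) = 0 := by
    rw [(ZMod.natCast_eq_one_iff_odd).mpr hW] at hsplit
    generalize (#(S ∩ W) : ZMod 2) = a, (#(Sᶜ ∩ W) : ZMod 2) = b at hsplit ⊢
    revert a b; decide
  rw [dicut_eq_sum_s3, dicut_eq_sum_s3]
  push_cast
  rw [sum_congr rfl fun x hx => sum_congr rfl fun y hy => hflip x hx y hy]
  simp only [sum_add_distrib, ← sum_mul_sum, sum_boole, filter_mem_eq_inter, hprod, add_zero]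

theorem isKObstruction_invert {D : V → V → Prop} {k : ℕ} (hD : IsKObstruction D k)
    {W : Finset V} (hW : Odd #W) : IsKObstruction (invert D W) k := by
  obtain ⟨r, Xs, Y, hr, hXne, hYne, hdisj, hdisjY, hcover, hcut, hxor, m, hm_odd, hm⟩ := hD
  have hY : Y = (univ.biUnion Xs)ᶜ := eq_compl_biUnion_of_partition Xs Y hdisjY hcover
  have hparity := dicut_invert_modEq_two D W (univ.biUnion Xs) hW (hY ▸ hxor)
  have hdiff : (2 : ℤ) ∣ dicut (invert D W) (univ.biUnion Xs) - dicut D (univ.biUnion Xs) :=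
    Nat.modEq_iff_dvd.mp hparity.symm
  refine ⟨r, Xs, Y, hr, hXne, hYne, hdisj, hdisjY, hcover,
    fun i => (undirCut_invert D W (Xs i)).trans (hcut i),
    fun x hx y hy => (xor_invert_iff D W x y).mpr (hxor x hx y hy),
    m + (dicut (invert D W) (univ.biUnion Xs) - dicut D (univ.biUnion Xs)),
    hm_odd.add_even (even_iff_two_dvd.mpr hdiff), by linarith⟩

theorem isKObstruction_invertSeq {D : V → V → Prop} {k : ℕ} (hD : IsKObstruction D k)
    {l : List (Finset V)} (hl : ∀ W ∈ l, Odd #W) : IsKObstruction (invertSeq D l) k := by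
  induction l generalizing D with
  | nil => exact hD
  | cons W l ih =>
    exact ih (isKObstruction_invert hD (hl W List.mem_cons_self)) fun X hX =>
      hl X (List.mem_cons_of_mem W hX)

end Obstruction

theorem stmt_3_general {V : Type*} [Fintype V] [DecidableEq V] (D : V → V → Prop)
    (p k : ℕ) (hpodd : Odd p)
    (hobs : IsKObstruction D k) :
    ∀ l : List (Finset V), (∀ X ∈ l, X.card = p) → ¬ ArcStrong (invertSeq D l) k :=
  fun _ hl => (isKObstruction_invertSeq hobs fun X hX => hl X hX ▸ hpodd).not_arcStrong

/-- For odd `p ≥ 3`, a `k`-obstruction cannot be made `k`-arc-strong by any finite sequence of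
inversions of sets of size exactly `p`. -/
theorem stmt_3 {V : Type*} [Fintype V] [DecidableEq V] (D : V → V → Prop)
    (hirr : ∀ v, ¬ D v v) (p k : ℕ) (hp : 3 ≤ p) (hpodd : Odd p) (hk : 1 ≤ k)
    (hobs : IsKObstruction D k) :
    ∀ l : List (Finset V), (∀ X ∈ l, X.card = p) → ¬ ArcStrong (invertSeq D l) k :=
  stmt_3_general D p k hpodd hobs
end

section
/- Let k be a positive integer, G a k-edge-connected graph, and X ⊆ V(G). Then the following are equivalent: (i) there exists a partition (X₁,…,X_t) of X such that d_G(X_i) = k for all i; (ii) for every x ∈ X there exists a set S_x ⊆ X with x ∈ S_x and d_G(S_x) = k. -/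
/-- The size `d_G(S)` of the cut of `G` determined by `S`. -/
def Multigraph.cut {V : Type*} [Fintype V] [DecidableEq V] (G : Multigraph V)
    (S : Finset V) : ℕ :=
  ∑ u ∈ S, ∑ v ∈ Sᶜ, G.mult u v

/-! A maximal tight set can be split off. Let `S ⊆ X` be maximal among the sets through `x` with
`d(S) = k`, and let `B ⊆ X` be tight and meet `S`. Submodularity gives
`d(S ∩ B) + d(S ∪ B) ≤ 2k`, and `k`-edge-connectivity makes both terms at least `k`, so `S ∪ B`
is tight, contradicting maximality; the exception `S ∪ B = V` forces `X = V`, and then `V \ S`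
is tight because `d(V \ S) = d(S)`. So every `y ∈ X \ S` lies in a tight subset of `X \ S`, and
induction on `X` produces the partition. -/

namespace Multigraph

variable {V : Type*} [Fintype V] [DecidableEq V] (G : Multigraph V) (k : ℕ)

def IsEdgeConnected : Prop :=
  ∀ S : Finset V, S.Nonempty → S ≠ Finset.univ → k ≤ G.cut S

def IsCoveredByTight (X : Finset V) : Prop :=
  ∀ x ∈ X, ∃ S ⊆ X, x ∈ S ∧ G.cut S = k

def IsTightPartition (X : Finset V) (P : Finset (Finset V)) : Prop :=
  (↑P : Set (Finset V)).PairwiseDisjoint id ∧ P.biUnion id = X ∧ ∀ A ∈ P, G.cut A = k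

variable {G k}

lemma cut_eq_sum_ite (S : Finset V) :
    G.cut S = ∑ u, ∑ v, if u ∈ S ∧ v ∉ S then G.mult u v else 0 := by
  simp only [cut, ite_and, ← Finset.mem_compl (s := S), ← Finset.ite_sum_zero, Finset.sum_ite_mem,
    Finset.univ_inter]

theorem cut_inter_add_cut_union_le (A B : Finset V) :
    G.cut (A ∩ B) + G.cut (A ∪ B) ≤ G.cut A + G.cut B := by
  simp only [cut_eq_sum_ite, ← Finset.sum_add_distrib]
  refine Finset.sum_le_sum fun u _ => Finset.sum_le_sum fun v _ => ?_
  simp only [Finset.mem_inter, Finset.mem_union]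
  split_ifs <;> first | omega | tauto

theorem cut_compl (S : Finset V) : G.cut Sᶜ = G.cut S := by
  rw [cut, compl_compl, Finset.sum_comm]
  exact Finset.sum_congr rfl fun u _ => Finset.sum_congr rfl fun v _ => G.symm v u

theorem IsEdgeConnected.cut_union_eq (hG : G.IsEdgeConnected k) {A B : Finset V}
    (hA : G.cut A = k) (hB : G.cut B = k) (hAB : (A ∩ B).Nonempty)
    (hAB_ne : A ∪ B ≠ Finset.univ) :
    G.cut (A ∪ B) = k := by
  have hinter : k ≤ G.cut (A ∩ B) :=
    hG _ hAB fun h => hAB_ne (Finset.univ_subset_iff.mp (h ▸ Finset.inter_subset_union))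
  have hunion : k ≤ G.cut (A ∪ B) := hG _ (hAB.mono Finset.inter_subset_union) hAB_ne
  have hsubmod := cut_inter_add_cut_union_le (G := G) A B
  omega

theorem IsCoveredByTight.exists_tight_sdiff (hG : G.IsEdgeConnected k) {X : Finset V}
    (hX : G.IsCoveredByTight k X) {x : V} (hx : x ∈ X) :
    ∃ S ⊆ X, x ∈ S ∧ G.cut S = k ∧ G.IsCoveredByTight k (X \ S) := by
  obtain ⟨S₀, hS₀X, hxS₀, hS₀⟩ := hX x hx
  obtain ⟨S, -, ⟨hSX, hxS, hS⟩, hSmax⟩ :=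
    Finite.exists_le_maximal (p := fun S => S ⊆ X ∧ x ∈ S ∧ G.cut S = k) ⟨hS₀X, hxS₀, hS₀⟩
  refine ⟨S, hSX, hxS, hS, fun y hy => ?_⟩
  obtain ⟨hyX, hyS⟩ := Finset.mem_sdiff.mp hy
  obtain ⟨B, hBX, hyB, hB⟩ := hX y hyX
  by_cases hdisj : Disjoint B S
  · exact ⟨B, Finset.subset_sdiff.mpr ⟨hBX, hdisj⟩, hyB, hB⟩
  by_cases huniv : S ∪ B = Finset.univ
  · have hXuniv : X = Finset.univ := Finset.eq_univ_of_forall fun a =>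
      Finset.union_subset hSX hBX (huniv ▸ Finset.mem_univ a)
    refine ⟨Sᶜ, by simp [hXuniv, Finset.compl_eq_univ_sdiff], Finset.mem_compl.mpr hyS, ?_⟩
    rw [cut_compl, hS]
  · have hSB : G.cut (S ∪ B) = k := hG.cut_union_eq hS hB
      (by rw [Finset.inter_comm]; exact Finset.not_disjoint_iff_nonempty_inter.mp hdisj) huniv
    have hSB_le : S ∪ B ⊆ S :=
      hSmax ⟨Finset.union_subset hSX hBX, Finset.mem_union_left _ hxS, hSB⟩ Finset.subset_union_left
    exact absurd (hSB_le (Finset.mem_union_right _ hyB)) hyS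

theorem IsTightPartition.insert {X S : Finset V} {P : Finset (Finset V)}
    (hP : G.IsTightPartition k (X \ S) P) (hSX : S ⊆ X) (hS : G.cut S = k) :
    G.IsTightPartition k X (insert S P) := by
  obtain ⟨hdisj, hunion, hcut⟩ := hP
  refine ⟨?_, ?_, Finset.forall_mem_insert _ _ _ |>.mpr ⟨hS, hcut⟩⟩
  · rw [Finset.coe_insert]
    refine hdisj.insert fun A hA _ => ?_
    have hAX : A ⊆ X \ S := hunion ▸ Finset.subset_biUnion_of_mem id hA
    exact (Finset.subset_sdiff.mp hAX).2.symm
  · rw [Finset.biUnion_insert, hunion, id, Finset.union_sdiff_of_subset hSX]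

theorem IsCoveredByTight.exists_isTightPartition (hG : G.IsEdgeConnected k) {X : Finset V}
    (hX : G.IsCoveredByTight k X) : ∃ P, G.IsTightPartition k X P := by
  induction X using Finset.strongInduction with
  | H X ih =>
    obtain rfl | ⟨x, hx⟩ := X.eq_empty_or_nonempty
    · exact ⟨∅, by simp [IsTightPartition]⟩
    obtain ⟨S, hSX, hxS, hS, hrest⟩ := hX.exists_tight_sdiff hG hx
    obtain ⟨P, hP⟩ := ih (X \ S) (Finset.sdiff_ssubset hSX ⟨x, hxS⟩) hrest
    exact ⟨insert S P, hP.insert hSX hS⟩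

theorem IsTightPartition.isCoveredByTight {X : Finset V} {P : Finset (Finset V)}
    (hP : G.IsTightPartition k X P) : G.IsCoveredByTight k X := by
  obtain ⟨-, hunion, hcut⟩ := hP
  intro x hx
  obtain ⟨A, hA, hxA⟩ := Finset.mem_biUnion.mp (hunion ▸ hx)
  exact ⟨A, hunion ▸ Finset.subset_biUnion_of_mem id hA, hxA, hcut A hA⟩

end Multigraph

theorem stmt_5_general {V : Type*} [Fintype V] [DecidableEq V] (G : Multigraph V) (k : ℕ)
    (hconn : ∀ S : Finset V, S.Nonempty → S ≠ Finset.univ → k ≤ G.cut S)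
    (X : Finset V) :
    (∃ P : Finset (Finset V), (↑P : Set (Finset V)).PairwiseDisjoint id ∧
        P.biUnion id = X ∧ ∀ A ∈ P, G.cut A = k) ↔
      (∀ x ∈ X, ∃ S ⊆ X, x ∈ S ∧ G.cut S = k) :=
  ⟨fun ⟨_, hP⟩ => Multigraph.IsTightPartition.isCoveredByTight hP,
    fun hX => Multigraph.IsCoveredByTight.exists_isTightPartition hconn hX⟩

/-- In a `k`-edge-connected graph `G`, a set `X` admits a partition into parts each with
cut size exactly `k` iff every `x ∈ X` lies in some `S ⊆ X` with cut size exactly `k`. -/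
theorem stmt_5 {V : Type*} [Fintype V] [DecidableEq V] (G : Multigraph V) (k : ℕ)
    (hk : 1 ≤ k)
    (hconn : ∀ S : Finset V, S.Nonempty → S ≠ Finset.univ → k ≤ G.cut S)
    (X : Finset V) :
    (∃ P : Finset (Finset V), (↑P : Set (Finset V)).PairwiseDisjoint id ∧
        P.biUnion id = X ∧ ∀ A ∈ P, G.cut A = k) ↔
      (∀ x ∈ X, ∃ S ⊆ X, x ∈ S ∧ G.cut S = k) :=
  stmt_5_general G k hconn X
end

section
/- Let p ≥ 3 with p ≡ 3 (mod 4) be an integer and let D be a digraph on n ≥ p+2 vertices. For any triple S of vertices of D disjoint from a fixed (p−1)-set X, performing all inversions of the sets X_i ∪ S, where X_i ranges over all subsets of X of size p−3, reverses exactly the arcs of D[S] and no other arc. -/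
/-!
An arc `uv` is reversed by a sequence of inversions iff it lies in an odd number of the
inverted sets. Put `T = {u, v} \ S` and `k = p - 3 ≡ 0 (mod 4)`, so `|X| = k + 2`. The arc `uv`
lies in `A ∪ S` iff `T ⊆ A`, and the number of `k`-subsets of `X` containing `T` is
`C(k + 2 - |T|, 2)`, which is odd iff `|T| = 0`, i.e. iff `u, v ∈ S`.
-/

open Finset

theorem Nat.odd_choose_two_iff (n : ℕ) : Odd (n.choose 2) ↔ n % 4 = 2 ∨ n % 4 = 3 := by
  induction n with
  | zero => decide
  | succ n ih =>
    simp only [Nat.choose_succ_succ', Nat.choose_one_right, Nat.reduceAdd, Nat.odd_iff] at ih ⊢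
    omega

theorem Finset.countP_toList {α : Type*} (s : Finset α) (P : α → Prop) [DecidablePred P] :
    s.toList.countP (fun a => decide (P a)) = #{a ∈ s | P a} := by
  rw [← Multiset.coe_countP, Finset.coe_toList, Multiset.countP_eq_card_filter]
  rfl

section Inversion

variable {V : Type*} [DecidableEq V]

theorem invertSeq_iff (D : V → V → Prop) (l : List (Finset V)) (u v : V) :
    invertSeq D l u v ↔
      if Odd (l.countP fun A => u ∈ A ∧ v ∈ A) then D v u else D u v := by
  induction l generalizing D with
  | nil => simp [invertSeq]
  | cons A l ih =>
    change invertSeq (invert D A) l u v ↔ _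
    rw [ih, List.countP_cons]
    by_cases huv : u ∈ A ∧ v ∈ A
    · simp only [invert, huv, and_self, if_true, decide_true, Nat.odd_add_one, ite_not]
    · have hvu : ¬(v ∈ A ∧ u ∈ A) := fun h => huv h.symm
      simp only [invert, huv, hvu, decide_false, Bool.false_eq_true, if_false, add_zero]

theorem invertSeq_iff_invert {D : V → V → Prop} {l : List (Finset V)} {S : Finset V}
    (hl : ∀ u v, Odd (l.countP fun A => u ∈ A ∧ v ∈ A) ↔ u ∈ S ∧ v ∈ S) (u v : V) :
    invertSeq D l u v ↔ invert D S u v := by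
  simp only [invertSeq_iff, hl, invert]

theorem countP_toList_map_union (s : Finset (Finset V)) (S : Finset V) (u v : V) :
    ((s.toList.map (· ∪ S)).countP fun A => u ∈ A ∧ v ∈ A) = #{A ∈ s | {u, v} \ S ⊆ A} := by
  rw [List.countP_map]
  convert s.countP_toList _ using 3 with A
  rw [Function.comp_apply, decide_eq_decide]
  simp only [subset_iff]
  grind

theorem odd_card_filter_powersetCard_superset_iff {X T : Finset V} {k : ℕ} (hX : #X = k + 2)
    (hk : k % 4 = 0) (hT : #T ≤ 2) : Odd #{A ∈ X.powersetCard k | T ⊆ A} ↔ T = ∅ := by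
  by_cases hfits : T ⊆ X ∧ #T ≤ k
  · rw [card_filter_powersetCard_subset T X k hfits.1 hfits.2, hX,
      Nat.choose_symm_of_eq_add (show k + 2 - #T = (k - #T) + 2 by omega),
      Nat.odd_choose_two_iff, ← card_eq_zero]
    omega
  · have hempty : {A ∈ X.powersetCard k | T ⊆ A} = ∅ :=
      filter_eq_empty_iff.2 fun A hA hTA => hfits
        ⟨hTA.trans (mem_powersetCard.1 hA).1, (card_le_card hTA).trans (mem_powersetCard.1 hA).2.le⟩
    have hT0 : T ≠ ∅ := by
      rintro rfl
      simp at hfits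
    simp [hempty, hT0]

end Inversion

theorem stmt_8_general {V : Type*} [DecidableEq V] (D : V → V → Prop) (p : ℕ)
    (hpmod : p % 4 = 3) (X S : Finset V) (hX : X.card = p - 1) :
    ∀ u v, invertSeq D ((X.powersetCard (p - 3)).toList.map (fun A => A ∪ S)) u v ↔
      invert D S u v := by
  refine invertSeq_iff_invert fun u v => ?_
  have hT : #({u, v} \ S) ≤ 2 := (card_le_card sdiff_subset).trans card_le_two
  rw [countP_toList_map_union, odd_card_filter_powersetCard_superset_iff (by omega) (by omega) hT,
    sdiff_eq_empty_iff_subset, insert_subset_iff, singleton_subset_iff]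

/-- Let `p ≡ 3 (mod 4)`, `p ≥ 3`, and let `D` be a digraph on `n ≥ p+2` vertices.  For any
triple `S` of vertices disjoint from a `(p-1)`-set `X`, performing all inversions of the sets
`Xᵢ ∪ S`, where `Xᵢ` ranges over the `(p-3)`-subsets of `X`, reverses exactly the arcs of
`D[S]` and no other arc; that is, the result equals `Inv(D, S)`. -/
theorem stmt_8 {V : Type*} [Fintype V] [DecidableEq V] (D : V → V → Prop) (p : ℕ)
    (hp : 3 ≤ p) (hpmod : p % 4 = 3) (hn : p + 2 ≤ Fintype.card V)
    (X S : Finset V) (hX : X.card = p - 1) (hS : S.card = 3) (hdisj : Disjoint X S) :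
    ∀ u v, invertSeq D ((X.powersetCard (p - 3)).toList.map (fun A => A ∪ S)) u v ↔
      invert D S u v :=
  stmt_8_general D p hpmod X S hX
end

section
/- Let k ≥ 1 be an integer, G a multigraph, and G' the multigraph obtained from G by contracting each k-frame of G to a single vertex. Then G' has at most (k−1)(|V(G')| − 1) edges. -/
open scoped Classical

/-- The induced subgraph `G[F]` is `k`-edge-connected: every cut of `G[F]` has size at
least `k` (vacuously true when `|F| ≤ 1`). -/
def Multigraph.inducedKEC {V : Type*} [DecidableEq V] (G : Multigraph V) (k : ℕ)
    (F : Finset V) : Prop :=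
  ∀ T : Finset V, T ⊆ F → T.Nonempty → T ≠ F → k ≤ ∑ u ∈ T, ∑ v ∈ F \ T, G.mult u v

/-- A `k`-frame: a nonempty vertex set `F` such that `G[F]` is `k`-edge-connected, and which
is inclusionwise maximal with that property. -/
def Multigraph.IsFrame {V : Type*} [DecidableEq V] (G : Multigraph V) (k : ℕ)
    (F : Finset V) : Prop :=
  F.Nonempty ∧ G.inducedKEC k F ∧ ∀ F' : Finset V, F ⊆ F' → G.inducedKEC k F' → F' = F

namespace FrameAux

variable {V : Type*} [Fintype V] [DecidableEq V] (G : Multigraph V) (k : ℕ)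

lemma cut_mono {T' T A B : Finset V} (h1 : T' ⊆ T) (h2 : A ⊆ B) :
    ∑ u ∈ T', ∑ v ∈ A, G.mult u v ≤ ∑ u ∈ T, ∑ v ∈ B, G.mult u v :=
  calc ∑ u ∈ T', ∑ v ∈ A, G.mult u v ≤ ∑ u ∈ T', ∑ v ∈ B, G.mult u v :=
        Finset.sum_le_sum fun u _ => Finset.sum_le_sum_of_subset h2
    _ ≤ _ := Finset.sum_le_sum_of_subset h1

lemma singleton_KEC (v : V) : G.inducedKEC k {v} := by
  intro T hT hne hneq
  rcases Finset.subset_singleton_iff.1 hT with rfl | rfl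
  · exact absurd hne Finset.not_nonempty_empty
  · exact absurd rfl hneq

lemma exists_frame (v : V) : ∃ F, G.IsFrame k F ∧ v ∈ F := by
  set s := (Finset.univ : Finset (Finset V)).filter (fun F => v ∈ F ∧ G.inducedKEC k F)
    with hs
  have hmem : ({v} : Finset V) ∈ s := by
    simp [hs, singleton_KEC G k v]
  obtain ⟨F, hF, hmax⟩ := Finset.exists_max_image s Finset.card ⟨_, hmem⟩
  simp only [hs, Finset.mem_filter] at hF
  refine ⟨F, ⟨⟨v, hF.2.1⟩, hF.2.2, ?_⟩, hF.2.1⟩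
  intro F' hsub hKEC
  have hF' : F' ∈ s := by
    simp only [hs, Finset.mem_filter]
    exact ⟨Finset.mem_univ _, hsub hF.2.1, hKEC⟩
  exact (Finset.eq_of_subset_of_card_le hsub (hmax _ hF')).symm

lemma frame_unique {F1 F2 : Finset V} (h1 : G.IsFrame k F1) (h2 : G.IsFrame k F2)
    {w : V} (hw1 : w ∈ F1) (hw2 : w ∈ F2) : F1 = F2 := by
  have hKEC : G.inducedKEC k (F1 ∪ F2) := by
    intro T hT hne hneq
    by_cases hA : (T ∩ F1).Nonempty ∧ T ∩ F1 ≠ F1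
    · calc k ≤ ∑ u ∈ T ∩ F1, ∑ x ∈ F1 \ (T ∩ F1), G.mult u x :=
            h1.2.1 _ Finset.inter_subset_right hA.1 hA.2
        _ ≤ _ := by
            refine cut_mono G Finset.inter_subset_left ?_
            intro x hx
            simp only [Finset.mem_sdiff, Finset.mem_inter, Finset.mem_union] at *
            tauto
    by_cases hB : (T ∩ F2).Nonempty ∧ T ∩ F2 ≠ F2
    · calc k ≤ ∑ u ∈ T ∩ F2, ∑ x ∈ F2 \ (T ∩ F2), G.mult u x :=
            h2.2.1 _ Finset.inter_subset_right hB.1 hB.2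
        _ ≤ _ := by
            refine cut_mono G Finset.inter_subset_left ?_
            intro x hx
            simp only [Finset.mem_sdiff, Finset.mem_inter, Finset.mem_union] at *
            tauto
    exfalso
    rw [not_and_or, Finset.not_nonempty_iff_eq_empty, not_not] at hA hB
    have hTsub : T = (T ∩ F1) ∪ (T ∩ F2) := by
      rw [← Finset.inter_union_distrib_left]
      exact (Finset.inter_eq_left.2 hT).symm
    rcases hA with hA | hA <;> rcases hB with hB | hB
    · rw [hTsub, hA, hB] at hne; simp at hne
    · have hwT : w ∈ T := (Finset.mem_inter.1 (by rw [hB]; exact hw2 : w ∈ T ∩ F2)).1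
      have : w ∈ T ∩ F1 := Finset.mem_inter.2 ⟨hwT, hw1⟩
      rw [hA] at this; simp at this
    · have hwT : w ∈ T := (Finset.mem_inter.1 (by rw [hA]; exact hw1 : w ∈ T ∩ F1)).1
      have : w ∈ T ∩ F2 := Finset.mem_inter.2 ⟨hwT, hw2⟩
      rw [hB] at this; simp at this
    · apply hneq
      rw [hTsub, hA, hB]
  have e1 := h1.2.2 (F1 ∪ F2) Finset.subset_union_left hKEC
  have e2 := h2.2.2 (F1 ∪ F2) Finset.subset_union_right hKEC
  exact e1.symm.trans e2


def wgt (G : Multigraph V) (F F' : Finset V) : ℕ := ∑ u ∈ F, ∑ v ∈ F', G.mult u v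

lemma wgt_symm (F F' : Finset V) : wgt G F F' = wgt G F' F := by
  unfold wgt
  rw [Finset.sum_comm]
  exact Finset.sum_congr rfl fun v _ => Finset.sum_congr rfl fun u _ => G.symm u v

lemma frames_pd {S : Finset (Finset V)} (hS : ∀ F ∈ S, G.IsFrame k F) :
    (↑S : Set (Finset V)).PairwiseDisjoint id := by
  intro F1 hF1 F2 hF2 hne
  rw [Function.onFun, Finset.disjoint_left]
  intro x hx1 hx2
  exact hne (frame_unique G k (hS F1 hF1) (hS F2 hF2) hx1 hx2)

lemma sum_wgt_eq {S1 S2 : Finset (Finset V)}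
    (h1 : (↑S1 : Set (Finset V)).PairwiseDisjoint id)
    (h2 : (↑S2 : Set (Finset V)).PairwiseDisjoint id) :
    ∑ F ∈ S1, ∑ F' ∈ S2, wgt G F F'
      = ∑ u ∈ S1.biUnion id, ∑ v ∈ S2.biUnion id, G.mult u v := by
  rw [Finset.sum_biUnion h1]
  refine Finset.sum_congr rfl fun F _ => ?_
  calc ∑ F' ∈ S2, wgt G F F' = ∑ F' ∈ S2, ∑ u ∈ F, ∑ v ∈ F', G.mult u v := rfl
    _ = ∑ u ∈ F, ∑ F' ∈ S2, ∑ v ∈ F', G.mult u v := Finset.sum_comm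
    _ = ∑ u ∈ F, ∑ v ∈ S2.biUnion id, G.mult u v :=
        Finset.sum_congr rfl fun u _ => (Finset.sum_biUnion h2).symm

lemma exists_small_cut (hk : 1 ≤ k) (S : Finset (Finset V))
    (hS : ∀ F ∈ S, G.IsFrame k F) (hcard : 2 ≤ S.card) :
    ∃ T, T ⊆ S ∧ T.Nonempty ∧ T ≠ S ∧
      ∑ F ∈ T, ∑ F' ∈ S \ T, wgt G F F' ≤ k - 1 := by
  set U := S.biUnion id with hU
  have hpd := frames_pd G k hS
  have hnKEC : ¬ G.inducedKEC k U := by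
    intro hKEC
    obtain ⟨F, hF, F', hF', hne⟩ := Finset.one_lt_card.1 hcard
    have hFU : F ⊆ U := Finset.subset_biUnion_of_mem id hF
    have hEq := (hS F hF).2.2 U hFU hKEC
    have hF'U : F' ⊆ U := Finset.subset_biUnion_of_mem id hF'
    rw [hEq] at hF'U
    obtain ⟨x, hx⟩ := (hS F' hF').1
    exact hne (frame_unique G k (hS F hF) (hS F' hF') (hF'U hx) hx)
  rw [Multigraph.inducedKEC] at hnKEC
  push_neg at hnKEC
  obtain ⟨T₀, hT₀U, hT₀ne, hT₀neq, hcut⟩ := hnKEC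
  have hcut' : ∑ u ∈ T₀, ∑ v ∈ U \ T₀, G.mult u v ≤ k - 1 := by omega
  have hsat : ∀ F ∈ S, F ⊆ T₀ ∨ ∀ x ∈ F, x ∉ T₀ := by
    intro F hF
    by_contra hcon
    push_neg at hcon
    obtain ⟨h1, x, hxF, hxT⟩ := hcon
    have hne2 : (T₀ ∩ F).Nonempty := ⟨x, Finset.mem_inter.2 ⟨hxT, hxF⟩⟩
    have hneqF : T₀ ∩ F ≠ F := by
      intro h
      exact h1 fun y hy => (Finset.mem_inter.1 (by rw [h]; exact hy : y ∈ T₀ ∩ F)).1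
    have hge := (hS F hF).2.1 (T₀ ∩ F) Finset.inter_subset_right hne2 hneqF
    have hFU : F ⊆ U := Finset.subset_biUnion_of_mem id hF
    have hle : ∑ u ∈ T₀ ∩ F, ∑ v ∈ F \ (T₀ ∩ F), G.mult u v
        ≤ ∑ u ∈ T₀, ∑ v ∈ U \ T₀, G.mult u v := by
      refine cut_mono G Finset.inter_subset_left ?_
      intro y hy
      simp only [Finset.mem_sdiff, Finset.mem_inter] at *
      exact ⟨hFU hy.1, fun hyT => hy.2 ⟨hyT, hy.1⟩⟩
    omega
  set T := S.filter (· ⊆ T₀) with hT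
  have hTS : T ⊆ S := Finset.filter_subset _ _
  refine ⟨T, hTS, ?_, ?_, ?_⟩
  · obtain ⟨x, hx⟩ := hT₀ne
    obtain ⟨F, hFS, hxF⟩ := Finset.mem_biUnion.1 (hT₀U hx)
    have hFT : F ⊆ T₀ := (hsat F hFS).resolve_right fun h => h x hxF hx
    exact ⟨F, Finset.mem_filter.2 ⟨hFS, hFT⟩⟩
  · obtain ⟨x, hxU, hxT⟩ :=
      Finset.exists_of_ssubset (Finset.ssubset_iff_subset_ne.2 ⟨hT₀U, hT₀neq⟩)
    obtain ⟨F, hFS, hxF⟩ := Finset.mem_biUnion.1 hxU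
    intro h
    have : F ∈ T := h ▸ hFS
    exact hxT ((Finset.mem_filter.1 this).2 hxF)
  · have heq := sum_wgt_eq G (hpd.subset (Finset.coe_subset.2 hTS))
      (hpd.subset (Finset.coe_subset.2 (Finset.sdiff_subset (s := S) (t := T))))
    rw [heq]
    refine le_trans (le_trans (cut_mono G ?_ ?_) le_rfl) hcut'
    · rw [Finset.biUnion_subset]
      exact fun F hF => (Finset.mem_filter.1 hF).2
    · rw [Finset.biUnion_subset]
      intro F hF
      have hFS : F ∈ S := (Finset.mem_sdiff.1 hF).1
      have hnT : F ∉ T := (Finset.mem_sdiff.1 hF).2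
      have hns : ∀ x ∈ F, x ∉ T₀ := by
        refine (hsat F hFS).resolve_left fun h => hnT (Finset.mem_filter.2 ⟨hFS, h⟩)
      intro y hy
      exact Finset.mem_sdiff.2 ⟨Finset.subset_biUnion_of_mem id hFS hy, hns y hy⟩

lemma main_bound (hk : 1 ≤ k) : ∀ n (S : Finset (Finset V)),
    (∀ F ∈ S, G.IsFrame k F) → S.card ≤ n →
    ∑ F ∈ S, ∑ F' ∈ S.erase F, wgt G F F' ≤ 2 * ((k - 1) * (S.card - 1)) := by
  intro n
  induction n with
  | zero =>
    intro S hS hc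
    rw [Finset.card_eq_zero.1 (Nat.le_zero.1 hc)]
    simp
  | succ n ih =>
    intro S hS hc
    by_cases h2 : 2 ≤ S.card
    · obtain ⟨T, hTS, hTne, hTneq, hcut⟩ := exists_small_cut G k hk S hS h2
      have hTss : T ⊂ S := Finset.ssubset_iff_subset_ne.2 ⟨hTS, hTneq⟩
      have hcT : T.card < S.card := Finset.card_lt_card hTss
      have hcST : (S \ T).card < S.card :=
        Finset.card_lt_card (Finset.sdiff_ssubset hTS hTne)
      have hSTne : (S \ T).Nonempty := by
        obtain ⟨x, hxS, hxT⟩ := Finset.exists_of_ssubset hTss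
        exact ⟨x, Finset.mem_sdiff.2 ⟨hxS, hxT⟩⟩
      have e1 := ih T (fun F hF => hS F (hTS hF)) (by omega)
      have e2 := ih (S \ T) (fun F hF => hS F (Finset.sdiff_subset hF)) (by omega)
      have hdisj : Disjoint T (S \ T) := Finset.disjoint_sdiff
      have hUnion : T ∪ S \ T = S := Finset.union_sdiff_of_subset hTS
      have split : ∀ f : Finset V → ℕ,
          ∑ F ∈ S, f F = ∑ F ∈ T, f F + ∑ F ∈ S \ T, f F := fun f => by
        rw [← Finset.sum_union hdisj, hUnion]
      rw [split]
      have partT : ∀ F ∈ T, ∑ F' ∈ S.erase F, wgt G F F'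
          = ∑ F' ∈ T.erase F, wgt G F F' + ∑ F' ∈ S \ T, wgt G F F' := by
        intro F hF
        have hset : S.erase F = T.erase F ∪ S \ T := by
          ext x
          simp only [Finset.mem_erase, Finset.mem_union, Finset.mem_sdiff]
          have h1 : x ∈ T → x ∈ S := fun h => hTS h
          have h2 : x = F → x ∈ T := fun h => h ▸ hF
          tauto
        rw [hset, Finset.sum_union (Finset.disjoint_of_subset_left (Finset.erase_subset _ _) hdisj)]
      have partST : ∀ F ∈ S \ T, ∑ F' ∈ S.erase F, wgt G F F'
          = ∑ F' ∈ T, wgt G F F' + ∑ F' ∈ (S \ T).erase F, wgt G F F' := by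
        intro F hF
        have hFnT : F ∉ T := (Finset.mem_sdiff.1 hF).2
        have hset : S.erase F = T ∪ (S \ T).erase F := by
          ext x
          simp only [Finset.mem_erase, Finset.mem_union, Finset.mem_sdiff]
          have h1 : x ∈ T → x ∈ S := fun h => hTS h
          have h2 : x = F → x ∉ T := fun h => h ▸ hFnT
          have h3 : x ∈ S \ T → x ∈ S := fun h => (Finset.mem_sdiff.1 h).1
          tauto
        rw [hset, Finset.sum_union (Finset.disjoint_of_subset_right (Finset.erase_subset _ _) hdisj)]
      rw [Finset.sum_congr rfl partT, Finset.sum_congr rfl partST,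
        Finset.sum_add_distrib, Finset.sum_add_distrib]
      have hsymm : ∑ F ∈ S \ T, ∑ F' ∈ T, wgt G F F'
          = ∑ F ∈ T, ∑ F' ∈ S \ T, wgt G F F' := by
        rw [Finset.sum_comm]
        exact Finset.sum_congr rfl fun F _ => Finset.sum_congr rfl fun F' _ => wgt_symm G F' F
      rw [hsymm]
      have hab : (T.card - 1) + ((S \ T).card - 1) + 1 = S.card - 1 := by
        have := Finset.card_sdiff_add_card_eq_card hTS
        have := hTne.card_pos
        have := hSTne.card_pos
        omega
      have harith : 2 * ((k - 1) * (T.card - 1)) + 2 * ((k - 1) * ((S \ T).card - 1))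
          + 2 * (k - 1) = 2 * ((k - 1) * (S.card - 1)) := by
        calc 2 * ((k - 1) * (T.card - 1)) + 2 * ((k - 1) * ((S \ T).card - 1)) + 2 * (k - 1)
            = 2 * ((k - 1) * ((T.card - 1) + ((S \ T).card - 1) + 1)) := by ring
          _ = _ := by rw [hab]
      omega
    · have hzero : ∑ F ∈ S, ∑ F' ∈ S.erase F, wgt G F F' = 0 := by
        refine Finset.sum_eq_zero fun F hF => ?_
        have : S.erase F = ∅ := by
          refine Finset.eq_empty_of_forall_notMem fun x hx => ?_
          obtain ⟨hxne, hxS⟩ := Finset.mem_erase.1 hx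
          have := Finset.one_lt_card.2 ⟨x, hxS, F, hF, hxne⟩
          omega
        rw [this]; simp
      rw [hzero]
      exact Nat.zero_le _

end FrameAux


/-- Contracting each `k`-frame of `G` to a single vertex yields a multigraph with at most
`(k-1)(|V(G')|-1)` edges.  The edges of the contracted multigraph `G'` are the edges of `G`
joining vertices in different frames (counted here twice, once in each direction), and the
vertices of `G'` are the frames. -/

theorem stmt_10 {V : Type*} [Fintype V] [DecidableEq V] (G : Multigraph V) (k : ℕ)
    (hk : 1 ≤ k) :
    ∑ u : V, ∑ v : V,
        (if ∃ F : Finset V, G.IsFrame k F ∧ u ∈ F ∧ v ∈ F then 0 else G.mult u v) ≤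
      2 * ((k - 1) *
        (((Finset.univ : Finset (Finset V)).filter (G.IsFrame k)).card - 1)) := by
  set 𝔉 := (Finset.univ : Finset (Finset V)).filter (G.IsFrame k) with h𝔉
  have hframe : ∀ F ∈ 𝔉, G.IsFrame k F := fun F hF => (Finset.mem_filter.1 hF).2
  have hpd := FrameAux.frames_pd G k hframe
  have huniv : 𝔉.biUnion id = Finset.univ := by
    ext v
    simp only [Finset.mem_biUnion, Finset.mem_univ, iff_true, h𝔉, Finset.mem_filter, id]
    obtain ⟨F, hF, hv⟩ := FrameAux.exists_frame G k v
    exact ⟨F, ⟨trivial, hF⟩, hv⟩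
  have h1 : ∀ f : V → ℕ, ∑ u : V, f u = ∑ F ∈ 𝔉, ∑ u ∈ F, f u := fun f => by
    rw [← huniv, Finset.sum_biUnion hpd]; rfl
  have key : ∀ F ∈ 𝔉, ∀ u ∈ F,
      (∑ v : V, (if ∃ F'' : Finset V, G.IsFrame k F'' ∧ u ∈ F'' ∧ v ∈ F'' then 0
        else G.mult u v))
      = ∑ F' ∈ 𝔉.erase F, ∑ v ∈ F', G.mult u v := by
    intro F hF u hu
    rw [h1]
    have step : ∀ F' ∈ 𝔉,
        (∑ v ∈ F', (if ∃ F'' : Finset V, G.IsFrame k F'' ∧ u ∈ F'' ∧ v ∈ F'' then 0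
          else G.mult u v))
        = if F' = F then 0 else ∑ v ∈ F', G.mult u v := by
      intro F' hF'
      by_cases hFF : F' = F
      · subst hFF
        rw [if_pos rfl]
        exact Finset.sum_eq_zero fun v hv => if_pos ⟨F', hframe F' hF', hu, hv⟩
      · rw [if_neg hFF]
        refine Finset.sum_congr rfl fun v hv => ?_
        rw [if_neg]
        rintro ⟨F'', hfr, hu'', hv''⟩
        exact hFF ((FrameAux.frame_unique G k hfr (hframe F' hF') hv'' hv).symm.trans
          (FrameAux.frame_unique G k hfr (hframe F hF) hu'' hu))
    rw [Finset.sum_congr rfl step,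
      ← Finset.sum_erase 𝔉 (a := F)
        (f := fun F' => if F' = F then 0 else ∑ v ∈ F', G.mult u v) (by simp)]
    exact Finset.sum_congr rfl fun F' hF' => if_neg (Finset.mem_erase.1 hF').1
  calc ∑ u : V, ∑ v : V,
        (if ∃ F : Finset V, G.IsFrame k F ∧ u ∈ F ∧ v ∈ F then 0 else G.mult u v)
      = ∑ F ∈ 𝔉, ∑ u ∈ F, ∑ v : V,
          (if ∃ F'' : Finset V, G.IsFrame k F'' ∧ u ∈ F'' ∧ v ∈ F'' then 0
            else G.mult u v) := h1 _
    _ = ∑ F ∈ 𝔉, ∑ u ∈ F, ∑ F' ∈ 𝔉.erase F, ∑ v ∈ F', G.mult u v :=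
        Finset.sum_congr rfl fun F hF => Finset.sum_congr rfl fun u hu => key F hF u hu
    _ = ∑ F ∈ 𝔉, ∑ F' ∈ 𝔉.erase F, FrameAux.wgt G F F' :=
        Finset.sum_congr rfl fun F _ => Finset.sum_comm
    _ ≤ 2 * ((k - 1) * (𝔉.card - 1)) :=
        FrameAux.main_bound G k hk 𝔉.card 𝔉 hframe le_rfl
end

section
/- Let k ≥ 1 be an integer, G a 2k-edge-connected graph, H a 2k-edge-connected subgraph of G, let G⃗ be a k-arc-strong orientation of G and H⃗ a k-arc-strong orientation of H. Define the orientation G⃗₁ of G in which every edge of H is oriented as in H⃗ and every other edge is oriented as in G⃗. Then G⃗₁ is k-arc-strong. -/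
open scoped Classical

/-- The tail of the edge `e` under the orientation `σ` (`σ e = true` means `e` is oriented
from its first end to its second end). -/
def otail {V E : Type*} (ends : E → V × V) (σ : E → Bool) (e : E) : V :=
  if σ e then (ends e).1 else (ends e).2

/-- The head of the edge `e` under the orientation `σ`. -/
def ohead {V E : Type*} (ends : E → V × V) (σ : E → Bool) (e : E) : V :=
  if σ e then (ends e).2 else (ends e).1

/-- Let `G` be a `2k`-edge-connected multigraph (edge type `E` with endpoints `ends`) and
`H` a `2k`-edge-connected subgraph of `G` (vertex set `VH`, edge set `EH`).  If `σ` is a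
`k`-arc-strong orientation of `G` and `τ` a `k`-arc-strong orientation of `H`, then the
orientation agreeing with `τ` on edges of `H` and with `σ` elsewhere is `k`-arc-strong. -/
theorem stmt_12 {V E : Type*} [Fintype V] [Fintype E]
    (ends : E → V × V) (k : ℕ) (hk : 1 ≤ k)
    (VH : Set V) (EH : Set E)
    (hsub : ∀ e ∈ EH, (ends e).1 ∈ VH ∧ (ends e).2 ∈ VH)
    (σ τ : E → Bool)
    (hGconn : ∀ S : Set V, S.Nonempty → S ≠ Set.univ →
      2 * k ≤ Nat.card {e : E //
        ((ends e).1 ∈ S ∧ (ends e).2 ∉ S) ∨ ((ends e).2 ∈ S ∧ (ends e).1 ∉ S)})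
    (hHconn : ∀ S : Set V, S ⊆ VH → S.Nonempty → S ≠ VH →
      2 * k ≤ Nat.card {e : E // e ∈ EH ∧
        (((ends e).1 ∈ S ∧ (ends e).2 ∉ S) ∨ ((ends e).2 ∈ S ∧ (ends e).1 ∉ S))})
    (hG : ∀ S : Set V, S.Nonempty → S ≠ Set.univ →
      k ≤ Nat.card {e : E // otail ends σ e ∈ S ∧ ohead ends σ e ∉ S})
    (hH : ∀ S : Set V, S ⊆ VH → S.Nonempty → S ≠ VH →
      k ≤ Nat.card {e : E // e ∈ EH ∧ otail ends τ e ∈ S ∧ ohead ends τ e ∉ S}) :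
    ∀ S : Set V, S.Nonempty → S ≠ Set.univ →
      k ≤ Nat.card {e : E //
        otail ends (fun e => if e ∈ EH then τ e else σ e) e ∈ S ∧
        ohead ends (fun e => if e ∈ EH then τ e else σ e) e ∉ S} := by
  intro S hSne hSuniv
  by_cases hcase : (S ∩ VH).Nonempty ∧ ¬ VH ⊆ S
  · obtain ⟨hne, hnsub⟩ := hcase
    have hneq : S ∩ VH ≠ VH := fun h => hnsub (fun v hv => (h.symm ▸ hv : v ∈ S ∩ VH).1)
    refine le_trans (hH (S ∩ VH) Set.inter_subset_right hne hneq) ?_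
    refine Nat.card_le_card_of_injective (fun e => ⟨e.1, ?_, ?_⟩) ?_
    · have h1 := e.2.1
      have h2 := e.2.2.1
      simpa [otail, h1] using h2.1
    · have h1 := e.2.1
      have h2 := e.2.2.2
      have hVH : ohead ends τ e.1 ∈ VH := by
        unfold ohead
        split
        · exact (hsub _ h1).2
        · exact (hsub _ h1).1
      intro hmem
      apply h2
      constructor
      · simpa [ohead, h1] using hmem
      · exact hVH
    · intro a b h
      exact Subtype.ext (Subtype.mk_eq_mk.mp h)
  · have hkey : ∀ e : E, otail ends σ e ∈ S → ohead ends σ e ∉ S → e ∉ EH := by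
      intro e ht hh heEH
      have h1 := (hsub _ heEH).1
      have h2 := (hsub _ heEH).2
      rcases not_and_or.mp hcase with h | h
      · rw [Set.not_nonempty_iff_eq_empty] at h
        have : otail ends σ e ∈ S ∩ VH := by
          refine ⟨ht, ?_⟩
          unfold otail; split; exacts [h1, h2]
        simp [h] at this
      · push_neg at h
        apply hh
        apply h
        unfold ohead; split; exacts [h2, h1]
    refine le_trans (hG S hSne hSuniv) ?_
    refine Nat.card_le_card_of_injective (fun e => ⟨e.1, ?_, ?_⟩) ?_
    · have := hkey e.1 e.2.1 e.2.2
      simpa [otail, this] using e.2.1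
    · have := hkey e.1 e.2.1 e.2.2
      intro hmem
      apply e.2.2
      simpa [ohead, this] using hmem
    · intro a b h
      exact Subtype.ext (Subtype.mk_eq_mk.mp h)
end

section
/- Let D be a multidigraph and v ∈ V(D) with out-degree 2 and in-degree 2, such that two parallel arcs link v to a vertex w₁, one arc links v to w₂, and one arc links v to w₃. Let 𝒳 be a collection of 2-element vertex sets such that inverting all sets of 𝒳 in D yields a 2-arc-strong multidigraph. Then either all three pairs {v,w₁}, {v,w₂}, {v,w₃} belong to 𝒳, or none of them does. -/
/-! Since `v` has total degree `4` and already four arcs to `w₁, w₂, w₃`, it has no other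
neighbours, and inverting `2`-sets only reverses arcs between `v` and these three vertices.
After the inversions `v` needs out- and in-degree at least `2` out of its four arcs. The two
parallel arcs to `w₁` contribute `2` on one side, so the two single arcs must both lie on the
other side: `{v, w₂}` and `{v, w₃}` are inverted exactly when `{v, w₁}` is. -/

/-- The number of arcs of the multidigraph `A` (arc multiplicities) leaving `S`. -/
def mdicut {V : Type*} [Fintype V] [DecidableEq V] (A : V → V → ℕ) (S : Finset V) : ℕ :=
  ∑ u ∈ S, ∑ v ∈ Sᶜ, A u v

/-- A multidigraph is `k`-arc-strong iff every dicut has size at least `k`. -/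
def mArcStrong {V : Type*} [Fintype V] [DecidableEq V] (A : V → V → ℕ) (k : ℕ) : Prop :=
  ∀ S : Finset V, S.Nonempty → S ≠ Finset.univ → k ≤ mdicut A S

/-- Inverting a vertex set `X` in a multidigraph. -/
def minvert {V : Type*} [DecidableEq V] (A : V → V → ℕ) (X : Finset V) : V → V → ℕ :=
  fun u v => if u ∈ X ∧ v ∈ X then A v u else A u v

/-- Applying a sequence of inversions to a multidigraph. -/
def minvertSeq {V : Type*} [DecidableEq V] (A : V → V → ℕ) (l : List (Finset V)) :
    V → V → ℕ :=
  l.foldl minvert A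

section

variable {V : Type*} [DecidableEq V]

lemma minvertSeq_apply (A : V → V → ℕ) (l : List (Finset V)) (u w : V) :
    minvertSeq A l u w =
      if Odd (l.countP fun X => u ∈ X ∧ w ∈ X) then A w u else A u w := by
  induction l generalizing A with
  | nil => simp [minvertSeq]
  | cons X l ih =>
    change minvertSeq (minvert A X) l u w = _
    rw [ih, List.countP_cons]
    by_cases hu : u ∈ X <;> by_cases hw : w ∈ X <;> split_ifs <;>
      simp_all [minvert, Nat.odd_add_one, ← Nat.not_even_iff_odd]

lemma mem_and_mem_iff_eq_pair {Z : Finset V} (hZ : Z.card = 2) {u w : V} (huw : u ≠ w) :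
    u ∈ Z ∧ w ∈ Z ↔ Z = {u, w} := by
  constructor
  · rintro ⟨hu, hw⟩
    refine (Finset.eq_of_subset_of_card_le (Finset.insert_subset hu ?_) ?_).symm
    · exact Finset.singleton_subset_iff.2 hw
    · rw [hZ, Finset.card_pair huw]
  · rintro rfl
    simp

lemma countP_toList_mem_and_mem {𝒳 : Finset (Finset V)} (h2 : ∀ Z ∈ 𝒳, Z.card = 2)
    {u w : V} (huw : u ≠ w) :
    (𝒳.toList.countP fun X => u ∈ X ∧ w ∈ X) = if {u, w} ∈ 𝒳 then 1 else 0 := by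
  rw [List.countP_congr (q := (· == {u, w})), ← List.count, List.Nodup.count 𝒳.nodup_toList]
  · simp only [Finset.mem_toList]
  intro Z hZ
  simpa using mem_and_mem_iff_eq_pair (h2 Z (Finset.mem_toList.1 hZ)) huw

lemma minvertSeq_toList_apply {𝒳 : Finset (Finset V)} (h2 : ∀ Z ∈ 𝒳, Z.card = 2)
    (A : V → V → ℕ) (u w : V) :
    minvertSeq A 𝒳.toList u w = if {u, w} ∈ 𝒳 then A w u else A u w := by
  rcases eq_or_ne u w with rfl | huw
  · simp [minvertSeq_apply]
  · rw [minvertSeq_apply, countP_toList_mem_and_mem h2 huw]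
    split_ifs <;> simp_all

lemma minvertSeq_toList_apply_eq_zero {𝒳 : Finset (Finset V)} (h2 : ∀ Z ∈ 𝒳, Z.card = 2)
    {A : V → V → ℕ} {u w : V} (huw : A u w = 0) (hwu : A w u = 0) :
    minvertSeq A 𝒳.toList u w = 0 := by
  rw [minvertSeq_toList_apply h2]
  split_ifs <;> assumption

variable [Fintype V]

lemma eq_zero_of_sum_le_sum {f : V → ℕ} {W : Finset V} (h : ∑ x, f x ≤ ∑ x ∈ W, f x)
    {x : V} (hx : x ∉ W) : f x = 0 := by
  have := Finset.single_le_sum (f := f) (fun _ _ => Nat.zero_le _) (Finset.mem_compl.2 hx)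
  have := W.sum_add_sum_compl f
  omega

variable {A : V → V → ℕ} {k : ℕ} {v : V} {W : Finset V}

lemma mArcStrong.le_sum_out (h : mArcStrong A k) (hv : {v} ≠ (Finset.univ : Finset V))
    (hW : ∀ x ∉ W, A v x = 0) : k ≤ ∑ x ∈ W, A v x :=
  calc k ≤ mdicut A {v} := h {v} (Finset.singleton_nonempty v) hv
    _ = ∑ x ∈ {v}ᶜ, A v x := Finset.sum_singleton _ _
    _ ≤ ∑ x, A v x := Finset.sum_le_sum_of_subset (Finset.subset_univ _)
    _ = ∑ x ∈ W, A v x := (Finset.sum_subset (Finset.subset_univ W) fun x _ hx => hW x hx).symm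

lemma mArcStrong.le_sum_in (h : mArcStrong A k) (hv : {v} ≠ (Finset.univ : Finset V))
    (hW : ∀ x ∉ W, A x v = 0) : k ≤ ∑ x ∈ W, A x v := by
  have hne : ({v}ᶜ : Finset V).Nonempty := by
    simpa [Finset.nonempty_iff_ne_empty] using hv
  calc k ≤ mdicut A {v}ᶜ := h {v}ᶜ hne (by simp)
    _ = ∑ x ∈ {v}ᶜ, A x v := by simp [mdicut]
    _ ≤ ∑ x, A x v := Finset.sum_le_sum_of_subset (Finset.subset_univ _)
    _ = ∑ x ∈ W, A x v := (Finset.sum_subset (Finset.subset_univ W) fun x _ hx => hW x hx).symm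

end

/-- Let `v` be a vertex of a multidigraph with in- and out-degree `2`, joined to `w₁` by two
parallel arcs and to each of `w₂` and `w₃` by a single arc.  If inverting a collection `𝒳` of
`2`-element sets makes the multidigraph `2`-arc-strong, then `𝒳` contains either all three of
`{v,w₁}, {v,w₂}, {v,w₃}`, or none of them. -/
theorem stmt_13 {V : Type*} [Fintype V] [DecidableEq V] (A : V → V → ℕ)
    (v w₁ w₂ w₃ : V)
    (hd : v ≠ w₁ ∧ v ≠ w₂ ∧ v ≠ w₃ ∧ w₁ ≠ w₂ ∧ w₁ ≠ w₃ ∧ w₂ ≠ w₃)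
    (hw₁ : (A v w₁ = 2 ∧ A w₁ v = 0) ∨ (A w₁ v = 2 ∧ A v w₁ = 0))
    (hw₂ : A v w₂ + A w₂ v = 1) (hw₃ : A v w₃ + A w₃ v = 1)
    (hout : ∑ u : V, A v u = 2) (hin : ∑ u : V, A u v = 2)
    (𝒳 : Finset (Finset V)) (h2 : ∀ Z ∈ 𝒳, Z.card = 2)
    (hstrong : mArcStrong (minvertSeq A 𝒳.toList) 2) :
    ({v, w₁} ∈ 𝒳 ∧ {v, w₂} ∈ 𝒳 ∧ {v, w₃} ∈ 𝒳) ∨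
      ({v, w₁} ∉ 𝒳 ∧ {v, w₂} ∉ 𝒳 ∧ {v, w₃} ∉ 𝒳) := by
  obtain ⟨hv₁, -, -, h₁₂, h₁₃, h₂₃⟩ := hd
  set W : Finset V := {w₁, w₂, w₃}
  have sum_W (f : V → ℕ) : ∑ x ∈ W, f x = f w₁ + f w₂ + f w₃ := by
    rw [Finset.sum_insert (by simp [h₁₂, h₁₃]), Finset.sum_pair h₂₃, add_assoc]
  have hrow : A v w₁ + A v w₂ + A v w₃ ≤ 2 := by
    rw [← hout, ← sum_W]; exact Finset.sum_le_sum_of_subset (Finset.subset_univ W)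
  have hcol : A w₁ v + A w₂ v + A w₃ v ≤ 2 := by
    rw [← hin, ← sum_W (A · v)]; exact Finset.sum_le_sum_of_subset (Finset.subset_univ W)
  have hout_W : ∑ x, A v x ≤ ∑ x ∈ W, A v x := by rw [hout, sum_W]; omega
  have hin_W : ∑ x, A x v ≤ ∑ x ∈ W, A x v := by rw [hin, sum_W (A · v)]; omega
  have hv : {v} ≠ (Finset.univ : Finset V) := fun h =>
    hv₁ (Finset.mem_singleton.1 (h ▸ Finset.mem_univ w₁)).symm
  have hBout := hstrong.le_sum_out hv fun x hx => minvertSeq_toList_apply_eq_zero h2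
    (eq_zero_of_sum_le_sum hout_W hx) (eq_zero_of_sum_le_sum hin_W hx)
  have hBin := hstrong.le_sum_in hv fun x hx => minvertSeq_toList_apply_eq_zero h2
    (eq_zero_of_sum_le_sum hin_W hx) (eq_zero_of_sum_le_sum hout_W hx)
  simp only [sum_W, minvertSeq_toList_apply h2, Finset.pair_comm _ v] at hBout hBin
  by_cases m₁ : {v, w₁} ∈ 𝒳 <;> by_cases m₂ : {v, w₂} ∈ 𝒳 <;> by_cases m₃ : {v, w₃} ∈ 𝒳 <;>
    simp [m₁, m₂, m₃] at hBout hBin ⊢ <;> omega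
end

section
/- Let D be a digraph, Q ⊆ V(D) such that D is 2-arc-strong in Q (every ordered pair of distinct vertices of Q is joined by 2 arc-disjoint directed paths). Suppose x₁,…,x_k,y₁,…,y_k are pairwise distinct vertices outside Q such that D contains two parallel arcs from Q to x₁, two parallel arcs from y_k to Q, two parallel arcs from y_i to x_{i+1} for all i ∈ [k−1], and for each i ∈ [k], an arc from x_i to y_i, an arc from x_i to Q, and an arc from Q to y_i. Then D is 2-arc-strong in Q ∪ {x₁,…,x_k,y₁,…,y_k}. -/
/-- There exist `m` pairwise arc-disjoint directed paths in the multidigraph `A`, each from a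
vertex satisfying `src` to a vertex satisfying `tgt`.  Arc-disjointness in a multidigraph
means that each arc `(u,v)` is used, in total over all the paths, at most `A u v` times. -/
def HasArcDisjointPathsM {V : Type*} [DecidableEq V] (A : V → V → ℕ) (m : ℕ)
    (src tgt : V → Prop) : Prop :=
  ∃ P : Fin m → List V,
    (∀ i, (P i).Nodup ∧
      (∃ s, (P i).head? = some s ∧ src s) ∧ (∃ t, (P i).getLast? = some t ∧ tgt t)) ∧
    ∀ u v : V, (∑ i, (arcsOf (P i)).count (u, v)) ≤ A u v

/-- The multidigraph `A` is `2`-arc-strong in `Q`: every ordered pair of distinct vertices of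
`Q` is joined by two arc-disjoint directed paths. -/
def TwoArcStrongIn {V : Type*} [DecidableEq V] (A : V → V → ℕ) (Q : Finset V) : Prop :=
  ∀ u ∈ Q, ∀ v ∈ Q, u ≠ v → HasArcDisjointPathsM A 2 (· = u) (· = v)

open Finset Relation

namespace Multidigraph

section Walks

variable {V : Type*}

def IsPath (p : List V) (u v : V) : Prop := p.Nodup ∧ p.head? = some u ∧ p.getLast? = some v

theorem arcsOf_cons_cons (a b : V) (l : List V) :
    arcsOf (a :: b :: l) = (a, b) :: arcsOf (b :: l) := rfl

theorem nodup_arcsOf : ∀ {l : List V}, l.Nodup → (arcsOf l).Nodup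
  | [], _ | [_], _ => by simp [arcsOf]
  | a :: b :: l, h => by
    rw [List.nodup_cons] at h
    rw [arcsOf_cons_cons, List.nodup_cons]
    exact ⟨fun hab => h.1 (List.of_mem_zip hab).1, nodup_arcsOf h.2⟩

theorem rel_of_mem_arcsOf {r : V → V → Prop} {a b : V} :
    ∀ {l : List V}, l.IsChain r → (a, b) ∈ arcsOf l → r a b
  | [], _, h | [_], _, h => by simp [arcsOf] at h
  | c :: d :: l, hl, h => by
    rw [List.isChain_cons_cons] at hl
    rw [arcsOf_cons_cons, List.mem_cons, Prod.mk.injEq] at h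
    rcases h with ⟨rfl, rfl⟩ | h
    exacts [hl.1, rel_of_mem_arcsOf hl.2 h]

theorem exists_isPath_isChain_of_reflTransGen {r : V → V → Prop} {u v : V}
    (h : ReflTransGen r u v) : ∃ p, IsPath p u v ∧ p.IsChain r := by
  induction h using ReflTransGen.head_induction_on with
  | refl => exact ⟨[v], ⟨List.nodup_singleton v, rfl, rfl⟩, List.isChain_singleton v⟩
  | @head a c hac _ ih =>
    obtain ⟨p, ⟨hnd, hhead, hlast⟩, hchain⟩ := ih
    by_cases ha : a ∈ p
    · obtain ⟨s, t, rfl⟩ := List.append_of_mem ha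
      refine ⟨a :: t, ⟨hnd.sublist (List.sublist_append_right s _), rfl, ?_⟩,
        hchain.right_of_append⟩
      rwa [List.getLast?_append_of_ne_nil _ (List.cons_ne_nil a t)] at hlast
    · obtain ⟨p, rfl⟩ : ∃ p', p = c :: p' := ⟨p.tail, (List.eq_cons_of_mem_head? hhead)⟩
      exact ⟨a :: c :: p, ⟨List.nodup_cons.2 ⟨ha, hnd⟩, rfl, by simpa using hlast⟩,
        hchain.cons_cons hac⟩

end Walks

section ArcCount

variable {V : Type*} [DecidableEq V]

def arcCount (l : List V) : V → V → ℕ := fun a b => (arcsOf l).count (a, b)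

theorem arcCount_cons_cons (a b : V) (l : List V) :
    arcCount (a :: b :: l) = arcCount [a, b] + arcCount (b :: l) := by
  funext c d
  simp [arcCount, List.count_cons, arcsOf, add_comm]

theorem arcCount_le_one {p : List V} (hp : p.Nodup) (a b : V) : arcCount p a b ≤ 1 :=
  List.nodup_iff_count_le_one.1 (nodup_arcsOf hp) (a, b)

theorem exists_isPath_arcCount_le {g : V → V → ℕ} {u v : V}
    (h : ReflTransGen (fun a b => 0 < g a b) u v) : ∃ p, IsPath p u v ∧ arcCount p ≤ g := by
  obtain ⟨p, hp, hchain⟩ := exists_isPath_isChain_of_reflTransGen h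
  refine ⟨p, hp, fun a b => show arcCount p a b ≤ g a b from ?_⟩
  rcases Nat.eq_zero_or_pos (arcCount p a b) with h0 | hpos
  · simp [h0]
  · have hab : 0 < g a b := rel_of_mem_arcsOf (r := fun a b => 0 < g a b) hchain
      (List.count_pos_iff.1 hpos)
    exact (arcCount_le_one hp.1 a b).trans hab

theorem _root_.HasArcDisjointPathsM.mono {A B : V → V → ℕ} {m : ℕ} {src tgt : V → Prop}
    (h : HasArcDisjointPathsM A m src tgt) (hAB : A ≤ B) : HasArcDisjointPathsM B m src tgt :=
  let ⟨P, hP, hcap⟩ := h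
  ⟨P, hP, fun a b => (hcap a b).trans (hAB a b)⟩

end ArcCount

section Excess

variable {V : Type*} [Fintype V]

def excess (g : V → V → ℕ) (z : V) : ℤ := ∑ w, (g z w : ℤ) - ∑ w, (g w z : ℤ)

theorem excess_add (g h : V → V → ℕ) (z : V) : excess (g + h) z = excess g z + excess h z := by
  simp only [excess, Pi.add_apply, Nat.cast_add, sum_add_distrib]
  ring

theorem excess_sub {g h : V → V → ℕ} (hle : h ≤ g) (z : V) :
    excess (g - h) z = excess g z - excess h z := by
  simp only [excess, Pi.sub_apply, Nat.cast_sub (hle _ _), sum_sub_distrib]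
  ring

theorem excess_inf_flip (g : V → V → ℕ) (z : V) : excess (g ⊓ flip g) z = 0 := by
  simp [excess, flip, min_comm]

end Excess

section Flows

variable {V : Type*} [Fintype V] [DecidableEq V]

def IsFlow (g : V → V → ℕ) (u v : V) (m : ℕ) : Prop :=
  ∀ z, excess g z = m * ((if z = u then 1 else 0) - if z = v then 1 else 0)

def cut (g : V → V → ℕ) (S : Finset V) : ℕ := ∑ a ∈ S, ∑ b ∈ Sᶜ, g a b

theorem excess_arcCount_pair (a b z : V) :
    excess (arcCount [a, b]) z = (if z = a then 1 else 0) - if z = b then 1 else 0 := by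
  have h : ∀ c d, arcCount [a, b] c d = if a = c ∧ b = d then 1 else 0 := by
    intro c d
    simp [arcCount, arcsOf, List.count_cons]
  simp only [excess, h]
  simp [ite_and, eq_comm]

theorem isFlow_zero (u v : V) : IsFlow 0 u v 0 := by
  simp [IsFlow, excess]

theorem isFlow_arcCount : ∀ {p : List V} {u v : V}, p.head? = some u → p.getLast? = some v →
    IsFlow (arcCount p) u v 1
  | [], _, _, h, _ => by simp at h
  | [a], u, v, hu, hv => by
    obtain rfl : a = u := by simpa using hu
    obtain rfl : a = v := by simpa using hv
    simp [IsFlow, excess, arcCount, arcsOf]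
  | a :: b :: l, u, v, hu, hv => fun z => by
    obtain rfl : a = u := by simpa using hu
    rw [arcCount_cons_cons, excess_add, excess_arcCount_pair,
      isFlow_arcCount (p := b :: l) rfl (by simpa using hv) z]
    ring

namespace IsFlow

variable {g h : V → V → ℕ} {u v : V} {m n : ℕ}

theorem add (hg : IsFlow g u v m) (hh : IsFlow h u v n) : IsFlow (g + h) u v (m + n) := fun z => by
  rw [excess_add, hg z, hh z]
  push_cast
  ring

theorem sub (hle : h ≤ g) (hg : IsFlow g u v (m + n)) (hh : IsFlow h u v n) :
    IsFlow (g - h) u v m := fun z => by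
  rw [excess_sub hle, hg z, hh z]
  push_cast
  ring

theorem sub_inf_flip (hg : IsFlow g u v m) : IsFlow (g - g ⊓ flip g) u v m := fun z => by
  rw [excess_sub inf_le_left, excess_inf_flip, sub_zero, hg z]

end IsFlow

theorem cut_add (g h : V → V → ℕ) (S : Finset V) : cut (g + h) S = cut g S + cut h S := by
  simp only [cut, Pi.add_apply, sum_add_distrib]

theorem cut_flip (g : V → V → ℕ) (S : Finset V) : cut (flip g) S = cut g Sᶜ := by
  rw [cut, cut, sum_comm, compl_compl]
  rfl

theorem cut_mono {g h : V → V → ℕ} (hle : g ≤ h) (S : Finset V) : cut g S ≤ cut h S :=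
  sum_le_sum fun a _ => sum_le_sum fun b _ => hle a b

theorem cut_sum {ι : Type*} (s : Finset ι) (g : ι → V → V → ℕ) (S : Finset V) :
    cut (∑ i ∈ s, g i) S = ∑ i ∈ s, cut (g i) S := by
  simp only [cut, Finset.sum_apply]
  rw [sum_comm (s := s)]
  exact sum_congr rfl fun a _ => (sum_comm (s := s)).symm

theorem sum_le_cut (g : V → V → ℕ) {S T : Finset V} (hTS : T ⊆ S) {w : V} (hw : w ∉ S) :
    ∑ a ∈ T, g a w ≤ cut g S :=
  calc ∑ a ∈ T, g a w
      ≤ ∑ a ∈ T, ∑ b ∈ Sᶜ, g a b := sum_le_sum fun a _ =>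
        single_le_sum (f := g a) (fun _ _ => Nat.zero_le _) (mem_compl.2 hw)
    _ ≤ cut g S := sum_le_sum_of_subset hTS

theorem sum_excess (g : V → V → ℕ) (S : Finset V) :
    ∑ z ∈ S, excess g z = cut g S - cut g Sᶜ := by
  have hout : ∑ z ∈ S, ∑ w, (g z w : ℤ) = ∑ z ∈ S, ∑ w ∈ S, (g z w : ℤ) + cut g S := by
    simp only [cut, Nat.cast_sum, ← sum_add_distrib, sum_add_sum_compl]
  have hin : ∑ z ∈ S, ∑ w, (g w z : ℤ) = ∑ z ∈ S, ∑ w ∈ S, (g z w : ℤ) + cut g Sᶜ := by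
    rw [sum_comm, ← sum_add_sum_compl S, sum_comm]
    simp only [cut, Nat.cast_sum, compl_compl]
  simp only [excess, sum_sub_distrib, hout, hin]
  ring

theorem IsFlow.cut_eq {g : V → V → ℕ} {u v : V} {m : ℕ} (hg : IsFlow g u v m) {S : Finset V}
    (hu : u ∈ S) (hv : v ∉ S) : cut g S = m + cut g Sᶜ := by
  have h := sum_excess g S
  rw [sum_congr rfl fun z _ => hg z] at h
  simp [← mul_sum, sum_sub_distrib, hu, hv] at h
  omega

theorem reflTransGen_of_one_le_cut {g : V → V → ℕ} {u v : V}
    (hcut : ∀ S : Finset V, u ∈ S → v ∉ S → 1 ≤ cut g S) :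
    ReflTransGen (fun a b => 0 < g a b) u v := by
  classical
  by_contra hv
  let S := univ.filter (ReflTransGen (fun a b => 0 < g a b) u)
  have hS : cut g S = 0 :=
    sum_eq_zero fun a ha => sum_eq_zero fun b hb => by
      simp only [S, mem_compl, mem_filter, mem_univ, true_and] at ha hb
      by_contra hab
      exact hb (ha.tail (Nat.pos_of_ne_zero hab))
  have := hcut S (by simpa [S] using ReflTransGen.refl) (by simpa [S] using hv)
  omega

theorem IsFlow.reflTransGen {g : V → V → ℕ} {u v : V} {m : ℕ} (hg : IsFlow g u v (m + 1)) :
    ReflTransGen (fun a b => 0 < g a b) u v :=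
  reflTransGen_of_one_le_cut fun _ hu hv => by
    rw [hg.cut_eq hu hv]
    omega

theorem IsFlow.augment {A f : V → V → ℕ} {u v : V} {m : ℕ} (hf : IsFlow f u v m)
    (hfA : f ≤ A) (hcut : ∀ S : Finset V, u ∈ S → v ∉ S → m + 1 ≤ cut A S) :
    ∃ f' ≤ A, IsFlow f' u v (m + 1) := by
  let R := A - f + flip f
  have hR : ∀ S : Finset V, u ∈ S → v ∉ S → 1 ≤ cut R S := fun S hu hv => by
    have hA : cut (A - f) S + cut f S = cut A S := by rw [← cut_add, tsub_add_cancel_of_le hfA]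
    have := hf.cut_eq hu hv
    have := hcut S hu hv
    simp only [R, cut_add, cut_flip]
    omega
  obtain ⟨p, ⟨-, hpu, hpv⟩, hpR⟩ := exists_isPath_arcCount_le (reflTransGen_of_one_le_cut hR)
  let s := f + arcCount p
  refine ⟨s - s ⊓ flip s, fun a b => ?_, (hf.add (isFlow_arcCount hpu hpv)).sub_inf_flip⟩
  have := hfA a b
  have := hpR a b
  simp only [s, R, flip, Pi.sub_apply, Pi.add_apply, Pi.inf_apply] at *
  omega

theorem exists_isFlow_of_le_cut {A : V → V → ℕ} {u v : V} :
    ∀ {m : ℕ}, (∀ S : Finset V, u ∈ S → v ∉ S → m ≤ cut A S) → ∃ f ≤ A, IsFlow f u v m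
  | 0, _ => ⟨0, bot_le, isFlow_zero u v⟩
  | m + 1, hcut =>
    have ⟨_, hfA, hf⟩ := exists_isFlow_of_le_cut fun S hu hv => (hcut S hu hv).trans' m.le_succ
    hf.augment hfA hcut

theorem hasArcDisjointPathsM_of_isFlow {u v : V} :
    ∀ {m : ℕ} {g : V → V → ℕ}, IsFlow g u v m → HasArcDisjointPathsM g m (· = u) (· = v)
  | 0, _, _ => ⟨fun i => i.elim0, fun i => i.elim0, fun _ _ => by simp⟩
  | m + 1, g, hg => by
    obtain ⟨p, ⟨hnd, hpu, hpv⟩, hpg⟩ := exists_isPath_arcCount_le hg.reflTransGen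
    obtain ⟨P, hP, hcap⟩ :=
      hasArcDisjointPathsM_of_isFlow (hg.sub hpg (isFlow_arcCount hpu hpv))
    refine ⟨Fin.cons p P, Fin.cases ⟨hnd, ⟨u, hpu, rfl⟩, ⟨v, hpv, rfl⟩⟩ hP, fun a b => ?_⟩
    have := hcap a b
    have := hpg a b
    simp only [Fin.sum_univ_succ, Fin.cons_zero, Fin.cons_succ, Pi.sub_apply] at *
    change arcCount p a b + _ ≤ _
    omega

theorem hasArcDisjointPathsM_of_le_cut {A : V → V → ℕ} {u v : V} {m : ℕ}
    (hcut : ∀ S : Finset V, u ∈ S → v ∉ S → m ≤ cut A S) :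
    HasArcDisjointPathsM A m (· = u) (· = v) :=
  let ⟨_, hfA, hf⟩ := exists_isFlow_of_le_cut hcut
  HasArcDisjointPathsM.mono (hasArcDisjointPathsM_of_isFlow hf) hfA

theorem _root_.HasArcDisjointPathsM.le_cut {A : V → V → ℕ} {m : ℕ} {src tgt : V → Prop}
    (h : HasArcDisjointPathsM A m src tgt) {S : Finset V} (hsrc : ∀ s, src s → s ∈ S)
    (htgt : ∀ t, tgt t → t ∉ S) : m ≤ cut A S := by
  obtain ⟨P, hP, hcap⟩ := h
  have hcross : ∀ i, 1 ≤ cut (arcCount (P i)) S := fun i => by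
    obtain ⟨-, ⟨s, hs, hsS⟩, ⟨t, ht, htS⟩⟩ := hP i
    rw [(isFlow_arcCount hs ht).cut_eq (hsrc s hsS) (htgt t htS)]
    omega
  calc m = ∑ _i : Fin m, 1 := by simp
    _ ≤ ∑ i, cut (arcCount (P i)) S := sum_le_sum fun i _ => hcross i
    _ = cut (∑ i, arcCount (P i)) S := (cut_sum _ _ _).symm
    _ ≤ cut A S := cut_mono (fun a b => by
        rw [Finset.sum_apply, Finset.sum_apply]
        exact hcap a b) S

/-- The first vertex of the chain `x₀, y₀, x₁, y₁, …` outside `S ⊇ Q` is entered by two arcs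
from `S`: from `Q` if it is `x₀`, from `yᵢ` if it is `xᵢ₊₁`, from `xᵢ` and from `Q` if it is
`yᵢ`. -/
theorem two_le_cut_of_chain {A : V → V → ℕ} {Q S : Finset V} (hQS : Q ⊆ S) {k : ℕ} (hk : 0 < k)
    {x y : Fin k → V} (hxQ : ∀ i, x i ∉ Q) (hx0 : 2 ≤ ∑ q ∈ Q, A q (x ⟨0, hk⟩))
    (hyx : ∀ i : Fin k, ∀ h : (i : ℕ) + 1 < k, 2 ≤ A (y i) (x ⟨(i : ℕ) + 1, h⟩))
    (hxy : ∀ i, 1 ≤ A (x i) (y i)) (hQy : ∀ i, 1 ≤ ∑ q ∈ Q, A q (y i)) (i : Fin k) :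
    (x i ∉ S → 2 ≤ cut A S) ∧ (y i ∉ S → 2 ≤ cut A S) := by
  have hy : ∀ i, (x i ∉ S → 2 ≤ cut A S) → y i ∉ S → 2 ≤ cut A S := fun i hx hyS => by
    by_cases hxS : x i ∈ S
    · have := sum_le_cut A (insert_subset hxS hQS) hyS
      rw [sum_insert (hxQ i)] at this
      have := hxy i
      have := hQy i
      omega
    · exact hx hxS
  have hx : ∀ n (hn : n < k), x ⟨n, hn⟩ ∉ S → 2 ≤ cut A S := by
    intro n
    induction n with
    | zero => exact fun _ hxS => hx0.trans (sum_le_cut A hQS hxS)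
    | succ n ih =>
      intro hn hxS
      by_cases hyS : y ⟨n, by omega⟩ ∈ S
      · have := sum_le_cut A (singleton_subset_iff.2 hyS) hxS
        rw [sum_singleton] at this
        exact (hyx ⟨n, by omega⟩ hn).trans this
      · exact hy _ (ih _) hyS
  exact ⟨hx i i.2, hy i (hx i i.2)⟩

theorem two_le_cut_of_chain_of_subset_compl {A : V → V → ℕ} {Q S : Finset V} (hQS : Q ⊆ Sᶜ)
    {k : ℕ} (hk : 0 < k) {x y : Fin k → V} (hyQ : ∀ i, y i ∉ Q)
    (hyk : 2 ≤ ∑ q ∈ Q, A (y ⟨k - 1, by omega⟩) q)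
    (hyx : ∀ i : Fin k, ∀ h : (i : ℕ) + 1 < k, 2 ≤ A (y i) (x ⟨(i : ℕ) + 1, h⟩))
    (hxy : ∀ i, 1 ≤ A (x i) (y i)) (hxQ : ∀ i, 1 ≤ ∑ q ∈ Q, A (x i) q) (i : Fin k) :
    (x i ∈ S → 2 ≤ cut A S) ∧ (y i ∈ S → 2 ≤ cut A S) := by
  -- in the reversed digraph the chain `y_k, x_k, …, y₁, x₁` has the same shape
  have h := two_le_cut_of_chain (A := flip A) hQS hk (x := y ∘ Fin.rev) (y := x ∘ Fin.rev)
    (fun _ => hyQ _)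
    (by rwa [Function.comp_apply, show Fin.rev ⟨0, hk⟩ = ⟨k - 1, by omega⟩ from Fin.ext (by simp)])
    (fun j h => by
      change 2 ≤ A (y (Fin.rev ⟨j + 1, h⟩)) (x j.rev)
      rw [show j.rev = ⟨(Fin.rev ⟨j + 1, h⟩ : ℕ) + 1, by simp; omega⟩ from Fin.ext (by simp; omega)]
      exact hyx _ _)
    (fun _ => hxy _) (fun _ => hxQ _) i.rev
  rw [cut_flip, compl_compl] at h
  exact ⟨fun hxS => h.2 (by simpa using hxS), fun hyS => h.1 (by simpa using hyS)⟩

end Flows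

end Multidigraph

open Multidigraph

/-- If `D` is `2`-arc-strong in `Q` and `x₁,…,x_k,y₁,…,y_k` are distinct vertices outside `Q`
with two parallel arcs from `Q` to `x₁`, two from `y_k` to `Q`, two from `yᵢ` to `xᵢ₊₁` for
each `i ∈ [k-1]`, and, for each `i`, an arc from `xᵢ` to `yᵢ`, an arc from `xᵢ` to `Q`, and
an arc from `Q` to `yᵢ`, then `D` is `2`-arc-strong in `Q ∪ {x₁,…,x_k,y₁,…,y_k}`. -/
theorem stmt_14 {V : Type*} [Fintype V] [DecidableEq V] (A : V → V → ℕ)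
    (Q : Finset V) (hQ : TwoArcStrongIn A Q)
    (k : ℕ) (hk : 0 < k) (x y : Fin k → V)
    (hxQ : ∀ i, x i ∉ Q) (hyQ : ∀ i, y i ∉ Q)
    (hx1 : 2 ≤ ∑ q ∈ Q, A q (x ⟨0, hk⟩))
    (hyk : 2 ≤ ∑ q ∈ Q, A (y ⟨k - 1, by omega⟩) q)
    (hyx : ∀ i : Fin k, ∀ h : (i : ℕ) + 1 < k, 2 ≤ A (y i) (x ⟨(i : ℕ) + 1, h⟩))
    (hxyarc : ∀ i, 1 ≤ A (x i) (y i))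
    (hxtoQ : ∀ i, 1 ≤ ∑ q ∈ Q, A (x i) q)
    (hQtoy : ∀ i, 1 ≤ ∑ q ∈ Q, A q (y i)) :
    TwoArcStrongIn A (Q ∪ Finset.image x Finset.univ ∪ Finset.image y Finset.univ) := by
  intro u hu v hv _
  refine hasArcDisjointPathsM_of_le_cut fun S huS hvS => ?_
  simp only [Finset.mem_union, Finset.mem_image, Finset.mem_univ, true_and] at hu hv
  by_cases hQS : Q ⊆ S
  · have hchain := two_le_cut_of_chain hQS hk hxQ hx1 hyx hxyarc hQtoy
    rcases hv with (hvQ | ⟨i, rfl⟩) | ⟨i, rfl⟩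
    exacts [absurd (hQS hvQ) hvS, (hchain i).1 hvS, (hchain i).2 hvS]
  by_cases hQS' : Q ⊆ Sᶜ
  · have hchain := two_le_cut_of_chain_of_subset_compl hQS' hk hyQ hyk hyx hxyarc hxtoQ
    rcases hu with (huQ | ⟨i, rfl⟩) | ⟨i, rfl⟩
    exacts [absurd (hQS' huQ) (Finset.notMem_compl.2 huS), (hchain i).1 huS, (hchain i).2 huS]
  obtain ⟨q₀, hq₀, hq₀S⟩ := Finset.not_subset.1 hQS
  obtain ⟨q₁, hq₁, hq₁S⟩ := Finset.not_subset.1 hQS'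
  rw [Finset.mem_compl, not_not] at hq₁S
  exact (hQ q₁ hq₁ q₀ hq₀ (ne_of_mem_of_not_mem hq₁S hq₀S)).le_cut
    (fun _ h => h ▸ hq₁S) (fun _ h => h ▸ hq₀S)
end

section
/- Let D be a digraph on vertex set V and let H be the digraph obtained from D by reversing all arcs. For every X ⊆ V, pushing all vertices of X in D yields Inv(D;𝒳) if |X| is even and Inv(H;𝒳) if |X| is odd, where 𝒳 = {V \ {x} : x ∈ X}. Consequently, D can be made strongly connected by pushing a set of vertices if and only if D can be made strongly connected by a sequence of inversions of sets of size exactly n−1, where n = |V|. -/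
/-!
Pushing `x` reverses exactly the arcs that inverting `V \ {x}` leaves alone, so inverting
`V \ {x}` is pushing `x` in the reversed digraph. Reversal commutes with pushes and is an
involution, so inverting `V \ {x}` for all `x ∈ X` is pushing `X` in `D` or in its
reverse according to the parity of `|X|`; reversal also preserves strong connectivity.
Conversely every set of size `n - 1` is some `V \ {x}`, and a sequence of pushes depends only
on which vertices occur an odd number of times, so it is the push of a set.
-/

/-- Pushing the vertex `w` in `D`: every arc incident to `w` is reversed. -/
def push {V : Type*} [DecidableEq V] (D : V → V → Prop) (w : V) : V → V → Prop :=
  fun u v => if u = w ∨ v = w then D v u else D u v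

/-- Pushing the vertices of a list, one after another. -/
def pushSeq {V : Type*} [DecidableEq V] (D : V → V → Prop) (l : List V) : V → V → Prop :=
  l.foldl push D

/-- A digraph is strongly connected iff every nonempty proper vertex set has an outgoing arc. -/
def StrongConn {V : Type*} [Fintype V] (D : V → V → Prop) : Prop :=
  ∀ S : Finset V, S.Nonempty → S ≠ Finset.univ → ∃ u ∈ S, ∃ v, v ∉ S ∧ D u v

section Push

variable {V : Type*} [DecidableEq V]

theorem push_flip (D : V → V → Prop) (w : V) : push (flip D) w = flip (push D w) := by
  funext u v
  simp only [push, flip, or_comm]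

theorem pushSeq_flip (D : V → V → Prop) (m : List V) :
    pushSeq (flip D) m = flip (pushSeq D m) := by
  induction m generalizing D with
  | nil => rfl
  | cons w m ih => exact (congrArg (pushSeq · m) (push_flip D w)).trans (ih (push D w))

theorem invert_univ_erase [Fintype V] (D : V → V → Prop) (w : V) :
    invert D (Finset.univ.erase w) = push (flip D) w := by
  funext u v
  simp only [invert, push, flip, Finset.mem_erase, Finset.mem_univ, and_true]
  by_cases hu : u = w <;> by_cases hv : v = w <;> simp [hu, hv]

theorem invertSeq_map_univ_erase [Fintype V] (D : V → V → Prop) (m : List V) :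
    invertSeq D (m.map (Finset.univ.erase ·)) =
      pushSeq (if Even m.length then D else flip D) m := by
  induction m generalizing D with
  | nil => rfl
  | cons w m ih =>
    change invertSeq (invert D (Finset.univ.erase w)) _ = pushSeq (push _ w) m
    rw [invert_univ_erase, ih]
    simp only [List.length_cons, Nat.even_add_one]
    split_ifs
    · rfl
    · rw [← push_flip]
      rfl

theorem pushSeq_apply (D : V → V → Prop) (m : List V) (u v : V) :
    pushSeq D m u v ↔ if Even (m.count u + m.count v) then D u v else D v u := by
  induction m generalizing D with
  | nil => simp [pushSeq]
  | cons w m ih =>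
    change pushSeq (push D w) m u v ↔ _
    rw [ih]
    simp only [push, List.count_cons, beq_iff_eq]
    by_cases hu : w = u <;> by_cases hv : w = v <;> by_cases he : Even (m.count u + m.count v) <;>
      simp_all [Nat.even_add_one, ← Nat.add_assoc, Nat.add_right_comm _ 1, eq_comm]

theorem pushSeq_eq_of_even_count_iff (D : V → V → Prop) {m m' : List V}
    (h : ∀ x, Even (m.count x) ↔ Even (m'.count x)) : pushSeq D m = pushSeq D m' := by
  funext u v
  simp only [pushSeq_apply, Nat.even_add, h]

theorem count_toList (X : Finset V) (x : V) : X.toList.count x = if x ∈ X then 1 else 0 := by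
  rw [← Multiset.coe_count, Finset.coe_toList, Multiset.count_eq_of_nodup X.nodup]
  rfl

theorem exists_finset_pushSeq_eq (D : V → V → Prop) (m : List V) :
    ∃ X : Finset V, pushSeq D X.toList = pushSeq D m := by
  refine ⟨m.toFinset.filter (fun x => Odd (m.count x)), pushSeq_eq_of_even_count_iff D ?_⟩
  intro x
  simp only [count_toList, Finset.mem_filter, List.mem_toFinset]
  by_cases hx : x ∈ m
  · by_cases ho : Odd (m.count x) <;> simp [hx, ho, Nat.not_odd_iff_even.mp]
  · simp [hx, List.count_eq_zero_of_not_mem hx]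

end Push

section StrongConn

variable {V : Type*} [Fintype V]

theorem StrongConn.flip {D : V → V → Prop} (h : StrongConn D) : StrongConn (flip D) := by
  classical
  intro S hS hne
  obtain ⟨u, hu, v, hv, huv⟩ :=
    h Sᶜ (by simpa [Finset.nonempty_iff_ne_empty] using hne) (by simpa using hS.ne_empty)
  exact ⟨v, by simpa using hv, u, Finset.mem_compl.mp hu, huv⟩

theorem strongConn_flip_iff {D : V → V → Prop} : StrongConn (flip D) ↔ StrongConn D :=
  ⟨StrongConn.flip, StrongConn.flip⟩

theorem StrongConn.of_isEmpty [IsEmpty V] (D : V → V → Prop) : StrongConn D :=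
  fun _ hS => (IsEmpty.false hS.choose).elim

theorem strongConn_invertSeq_map_univ_erase_iff [DecidableEq V] (D : V → V → Prop)
    (m : List V) :
    StrongConn (invertSeq D (m.map (Finset.univ.erase ·))) ↔ StrongConn (pushSeq D m) := by
  rw [invertSeq_map_univ_erase]
  split_ifs
  · rfl
  · rw [pushSeq_flip, strongConn_flip_iff]

end StrongConn

theorem Finset.exists_eq_univ_erase_of_card_eq {V : Type*} [Fintype V] [DecidableEq V]
    [Nonempty V] {Z : Finset V} (hZ : Z.card = Fintype.card V - 1) :
    ∃ x, Z = Finset.univ.erase x := by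
  have hV := Fintype.card_pos (α := V)
  obtain ⟨x, hx⟩ := Finset.card_eq_one.mp (by rw [Finset.card_compl, hZ]; omega : Zᶜ.card = 1)
  exact ⟨x, by rw [← Finset.compl_singleton, ← hx, compl_compl]⟩

/-- Let `H` be obtained from `D` by reversing all arcs.  Pushing a set `X` of vertices in `D`
yields `Inv(D;𝒳)` if `|X|` is even and `Inv(H;𝒳)` if `|X|` is odd, where
`𝒳 = {V \ {x} : x ∈ X}`.  Consequently, `D` can be made strongly connected by pushing a set
of vertices iff it can be made strongly connected by a sequence of inversions of sets of size
exactly `n - 1`. -/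
theorem stmt_15 {V : Type*} [Fintype V] [DecidableEq V] (D : V → V → Prop) :
    (∀ X : Finset V,
      (Even X.card → ∀ u v, pushSeq D X.toList u v ↔
          invertSeq D (X.toList.map (fun x => Finset.univ.erase x)) u v) ∧
      (Odd X.card → ∀ u v, pushSeq D X.toList u v ↔
          invertSeq (fun a b => D b a) (X.toList.map (fun x => Finset.univ.erase x)) u v)) ∧
    ((∃ X : Finset V, StrongConn (pushSeq D X.toList)) ↔
      ∃ l : List (Finset V), (∀ Z ∈ l, Z.card = Fintype.card V - 1) ∧
        StrongConn (invertSeq D l)) := by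
  refine ⟨fun X => ⟨fun he u v => ?_, fun ho u v => ?_⟩,
    ⟨fun ⟨X, hX⟩ => ?_, fun ⟨l, hl, hc⟩ => ?_⟩⟩
  · rw [invertSeq_map_univ_erase, Finset.length_toList, if_pos he]
  · rw [invertSeq_map_univ_erase, Finset.length_toList, if_neg (Nat.not_even_iff_odd.mpr ho)]
    rfl
  · refine ⟨X.toList.map (Finset.univ.erase ·), fun Z hZ => ?_,
      (strongConn_invertSeq_map_univ_erase_iff D _).mpr hX⟩
    obtain ⟨x, -, rfl⟩ := List.mem_map.mp hZ
    simp
  · cases isEmpty_or_nonempty V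
    · exact ⟨∅, .of_isEmpty _⟩
    obtain ⟨m, rfl⟩ : l ∈ Set.range (List.map (Finset.univ.erase ·)) := by
      rw [Set.range_list_map]
      exact fun Z hZ => (Finset.exists_eq_univ_erase_of_card_eq (hl Z hZ)).imp fun _ => Eq.symm
    obtain ⟨X, hX⟩ := exists_finset_pushSeq_eq D m
    exact ⟨X, hX ▸ (strongConn_invertSeq_map_univ_erase_iff D m).mp hc⟩
end
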